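/- arXiv:1501.06533 — 8 statements merged into one kernel-verified Lean document; each statement's English description precedes it below -/
import Mathlib

section
/- If h = m·r with m, r ≥ 1, A is a finite subset of an abelian group G with |A| = k and 1 ≤ h ≤ r·k, then h^(r)A = r·(m^∧A), i.e., the generalized h-fold sumset with repetition bound r equals the r-fold sumset of the m-fold restricted sumset of A. -/
open Finset Pointwise

/-- The generalized sumset `h^(r)A`: sums of `h` elements of `A`,
each element used at most `r` times. -/
def genSum {G : Type*} [AddCommGroup G] (r h : ℕ) (A : Finset G) : Set G :=
  {x | ∃ c : G → ℕ, (∀ a, c a ≤ r) ∧ (∀ a, c a ≠ 0 → a ∈ A) ∧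
    (∑ a ∈ A, c a) = h ∧ (∑ a ∈ A, c a • a) = x}

/-- The `r`-fold ordinary sumset `B + ⋯ + B` of a set `B`. -/
def iterSum {G : Type*} [AddCommGroup G] (r : ℕ) (B : Set G) : Set G :=
  {x | ∃ f : Fin r → G, (∀ i, f i ∈ B) ∧ (∑ i, f i) = x}

/-- A set of integers is an arithmetic progression. -/
def IsAPSet (S : Set ℤ) : Prop :=
  ∃ a d : ℤ, ∃ n : ℕ, 0 < d ∧ S = ↑((Finset.range n).image fun i : ℕ => a + d * (i : ℤ))

/-
An element of `h^(r)A` with `h = m r` is a multiset on `A` of size `m r` with multiplicities at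
most `r`. Peel off one `m`-element subset `u` of its support containing every element of full
multiplicity `r`; such a `u` exists because there are at most `m` elements of multiplicity `r` and
at least `m` of positive multiplicity. What remains has size `m (r - 1)` and multiplicities at most
`r - 1`, so by induction the multiset splits into `r` sets of size `m`, i.e. its sum lies in
`r (m^∧A)`. The reverse inclusion is immediate.
-/

namespace Finset

variable {α : Type*}

theorem sum_sum_eq_sum_card_nsmul {ι M : Type*} [Fintype ι] [DecidableEq α] [AddCommMonoid M]
    {S : Finset α} {s : ι → Finset α} (hs : ∀ i, s i ⊆ S) (f : α → M) :
    ∑ i, ∑ a ∈ s i, f a = ∑ a ∈ S, #{i | a ∈ s i} • f a := by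
  rw [sum_comm' (t' := S) (s' := fun a => {i | a ∈ s i}) (fun i a => by
    simpa using fun ha => hs i ha)]
  simp only [sum_const]

theorem exists_subset_card_eq_of_sum_eq_mul_succ (S : Finset α) (c : α → ℕ) {m r : ℕ}
    (hc : ∀ a ∈ S, c a ≤ r + 1) (hsum : ∑ a ∈ S, c a = m * (r + 1)) :
    ∃ u ⊆ S, #u = m ∧ (∀ a ∈ S, c a = r + 1 → a ∈ u) ∧ ∀ a ∈ u, c a ≠ 0 := by
  classical
  have hTP : {a ∈ S | c a = r + 1} ⊆ {a ∈ S | c a ≠ 0} :=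
    monotone_filter_right S fun a _ (ha : c a = r + 1) => by omega
  have hT : #{a ∈ S | c a = r + 1} ≤ m := by
    refine Nat.le_of_mul_le_mul_right ?_ r.succ_pos
    calc #{a ∈ S | c a = r + 1} * (r + 1) = ∑ a ∈ S with c a = r + 1, c a := by
          rw [sum_congr rfl fun a ha => (mem_filter.mp ha).2, sum_const, smul_eq_mul]
      _ ≤ ∑ a ∈ S, c a := sum_le_sum_of_subset (filter_subset _ _)
      _ = m * (r + 1) := hsum
  have hP : m ≤ #{a ∈ S | c a ≠ 0} := by
    refine Nat.le_of_mul_le_mul_right ?_ r.succ_pos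
    calc m * (r + 1) = ∑ a ∈ S with c a ≠ 0, c a := by
          rw [sum_filter_ne_zero, hsum]
      _ ≤ #{a ∈ S | c a ≠ 0} * (r + 1) :=
          sum_le_card_nsmul _ _ _ fun a ha => hc a (mem_filter.mp ha).1
  obtain ⟨u, hTu, huP, hu⟩ := exists_subsuperset_card_eq hTP hT hP
  exact ⟨u, huP.trans (filter_subset _ _), hu, fun a ha hca => hTu (mem_filter.mpr ⟨ha, hca⟩),
    fun a ha => (mem_filter.mp (huP ha)).2⟩

theorem exists_subsets_card_eq_of_sum_eq_mul [DecidableEq α] (S : Finset α) {m : ℕ} :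
    ∀ {r : ℕ} (c : α → ℕ), (∀ a ∈ S, c a ≤ r) → ∑ a ∈ S, c a = m * r →
    ∃ s : Fin r → Finset α, (∀ i, s i ⊆ S) ∧ (∀ i, #(s i) = m) ∧
      ∀ a ∈ S, #{i | a ∈ s i} = c a
  | 0, c, hc, _ =>
    ⟨Fin.elim0, Fin.rec0, Fin.rec0, fun a ha => by simpa using (Nat.le_zero.mp (hc a ha)).symm⟩
  | r + 1, c, hc, hsum => by
    obtain ⟨u, huS, hu, hcu, huc⟩ := exists_subset_card_eq_of_sum_eq_mul_succ S c hc hsum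
    let c' : α → ℕ := fun a => c a - if a ∈ u then 1 else 0
    have hc'_add : ∀ a ∈ S, c' a + (if a ∈ u then 1 else 0) = c a := by
      intro a ha
      by_cases hau : a ∈ u
      · simp only [c', hau, if_true]; have := huc a hau; omega
      · simp [c', hau]
    have hc' : ∀ a ∈ S, c' a ≤ r := by
      intro a ha
      by_cases hau : a ∈ u
      · simp only [c', hau, if_true]; have := hc a ha; omega
      · simp only [c', hau, if_false]; have := hc a ha; have := mt (hcu a ha) hau; omega
    have hsum' : ∑ a ∈ S, c' a = m * r := by
      have := sum_congr rfl hc'_add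
      rw [sum_add_distrib, sum_boole, filter_mem_eq_inter, inter_eq_right.mpr huS, hu, hsum]
        at this
      simp only [Nat.cast_id] at this
      linarith
    obtain ⟨s, hsS, hs, hcount⟩ := exists_subsets_card_eq_of_sum_eq_mul S c' hc' hsum'
    refine ⟨Fin.cons u s, Fin.cases huS hsS, Fin.cases hu hs, fun a ha => ?_⟩
    rw [card_filter, Fin.sum_univ_succ, ← hc'_add a ha, ← hcount a ha, card_filter]
    simp only [Fin.cons_zero, Fin.cons_succ]
    ring

end Finset

section

variable {G : Type*} [AddCommGroup G] (A : Finset G)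

theorem genSum_one_eq (m : ℕ) :
    genSum 1 m A = {x | ∃ s ⊆ A, #s = m ∧ ∑ a ∈ s, a = x} := by
  classical
  ext x
  constructor
  · rintro ⟨c, hc, hcA, hsum, rfl⟩
    have hc01 : ∀ a, c a = 0 ∨ c a = 1 := fun a => by have := hc a; omega
    refine ⟨{a ∈ A | c a ≠ 0}, filter_subset _ _, ?_, ?_⟩
    · rw [← hsum, card_filter]
      exact sum_congr rfl fun a _ => by rcases hc01 a with h | h <;> simp [h]
    · rw [sum_filter]
      exact sum_congr rfl fun a _ => by rcases hc01 a with h | h <;> simp [h]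
  · rintro ⟨s, hsA, rfl, rfl⟩
    refine ⟨fun a => if a ∈ s then 1 else 0, fun a => ite_le_one le_rfl zero_le_one,
      fun a ha => hsA (by simpa using ha), ?_, ?_⟩
    · rw [sum_boole, filter_mem_eq_inter, inter_eq_right.mpr hsA, Nat.cast_id]
    · simp only [ite_smul, one_smul, zero_smul]
      rw [sum_ite_mem, inter_eq_right.mpr hsA]

theorem genSum_mul_subset_iterSum (m r : ℕ) :
    genSum r (m * r) A ⊆ iterSum r (genSum 1 m A) := by
  classical
  rintro _ ⟨c, hc, -, hsum, rfl⟩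
  obtain ⟨s, hsA, hs, hcount⟩ :=
    exists_subsets_card_eq_of_sum_eq_mul A c (fun a _ => hc a) hsum
  refine ⟨fun i => ∑ a ∈ s i, a, fun i => genSum_one_eq A m ▸ ⟨s i, hsA i, hs i, rfl⟩, ?_⟩
  rw [sum_sum_eq_sum_card_nsmul hsA]
  exact sum_congr rfl fun a ha => by rw [hcount a ha]

theorem iterSum_subset_genSum_mul (m r : ℕ) :
    iterSum r (genSum 1 m A) ⊆ genSum r (m * r) A := by
  classical
  rintro _ ⟨f, hf, rfl⟩
  simp only [genSum_one_eq, Set.mem_ofPred_eq] at hf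
  choose s hsA hs hsf using hf
  refine ⟨fun a => #{i | a ∈ s i}, fun a => card_le_univ _ |>.trans_eq (Fintype.card_fin r),
    fun a ha => ?_, ?_, ?_⟩
  · obtain ⟨i, hi⟩ := card_ne_zero.mp ha
    exact hsA i (mem_filter.mp hi).2
  · calc ∑ a ∈ A, #{i | a ∈ s i} = ∑ i, #(s i) := by
          simpa using (sum_sum_eq_sum_card_nsmul hsA fun _ => (1 : ℕ)).symm
      _ = m * r := by simp [hs, mul_comm]
  · simp only [← hsf, sum_sum_eq_sum_card_nsmul hsA]

end

theorem stmt0_general {G : Type*} [AddCommGroup G] (A : Finset G) (h m r : ℕ) (hh : h = m * r) :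
    genSum r h A = iterSum r (genSum 1 m A) :=
  hh ▸ (genSum_mul_subset_iterSum A m r).antisymm (iterSum_subset_genSum_mul A m r)

theorem stmt0 {G : Type*} [AddCommGroup G] (A : Finset G) (k h m r : ℕ)
    (hA : A.card = k) (hm : 1 ≤ m) (hr : 1 ≤ r) (hh : h = m * r)
    (h1 : 1 ≤ h) (h2 : h ≤ r * k) :
    genSum r h A = iterSum r (genSum 1 m A) :=
  stmt0_general A h m r hh
end

section
/- Let h, r ≥ 1 be integers with h = m·r + ε where 0 ≤ ε ≤ r−1, and let A be a nonempty finite set of integers with |A| = k and 1 ≤ h ≤ r·k. Then |h^(r)A| ≥ h·k − m²·r + 1 − 2·m·ε − ε. -/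
open Finset Pointwise

/-!
List `A` as `a 0 < ⋯ < a (k - 1)` and view an element of `h^(r)A` as `h` ordered units placed on
the positions `0, …, k - 1`, at most `r` of them per position, i.e. unit `u` strictly below unit
`u + r`. Start from the lowest placement `u ↦ u / r` and repeatedly move up by one the topmost unit
that is not yet at its highest possible position `k - 1 - (h - 1 - u) / r`: every move keeps the
placement valid and strictly increases the sum. The number of moves is
`∑ u < h, (k - 1 - (h - 1 - u) / r - u / r) = h k - m² r - 2 m ε - ε`, and the sums met along the
way are that many plus one distinct elements of `h^(r)A`.
-/

theorem Finset.card_le_of_forall_lt_add {s : Finset ℕ} {r : ℕ}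
    (hs : ∀ u ∈ s, ∀ v ∈ s, v < u + r) : #s ≤ r := by
  rcases s.eq_empty_or_nonempty with rfl | hne
  · simp
  calc #s ≤ #(Ico (s.min' hne) (s.min' hne + r)) :=
        card_le_card fun v hv => mem_Ico.2 ⟨s.min'_le v hv, hs _ (s.min'_mem hne) v hv⟩
    _ = r := by simp

theorem Finset.exists_strictMonoOn_mem {α : Type*} [LinearOrder α] [Inhabited α] (A : Finset α) :
    ∃ a : ℕ → α, StrictMonoOn a (Set.Iio #A) ∧ ∀ i < #A, a i ∈ A := by
  refine ⟨fun i => if hi : i < #A then A.orderEmbOfFin rfl ⟨i, hi⟩ else default,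
    fun i hi j hj hij => ?_, fun i hi => ?_⟩
  · simp only [dif_pos (Set.mem_Iio.1 hi), dif_pos (Set.mem_Iio.1 hj)]
    exact (A.orderEmbOfFin rfl).strictMono (Fin.mk_lt_mk.2 hij)
  · simp only [dif_pos hi]
    exact A.orderEmbOfFin_mem rfl _

theorem Finset.sum_apply_update_add {M : Type*} [AddCommMonoid M] {s : Finset ℕ} {w : ℕ}
    (hw : w ∈ s) (F : ℕ → ℕ → M) (p : ℕ → ℕ) (b : ℕ) :
    ∑ u ∈ s, F u (Function.update p w b u) + F w (p w) = ∑ u ∈ s, F u (p u) + F w b := by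
  rw [← add_sum_erase _ _ hw, ← add_sum_erase _ _ hw,
    sum_congr rfl fun u hu => by rw [Function.update_of_ne (ne_of_mem_erase hu)],
    Function.update_self]
  abel

theorem exists_finset_card_eq_of_forall_exists_step {α β : Type*} [LinearOrder β] {P : α → Prop}
    (Φ : α → ℕ) (S : α → β) (step : ∀ x, P x → Φ x ≠ 0 → ∃ y, P y ∧ Φ y + 1 = Φ x ∧ S x < S y)
    {x : α} (hx : P x) :
    ∃ T : Finset β, #T = Φ x + 1 ∧ ∀ t ∈ T, S x ≤ t ∧ ∃ y, P y ∧ S y = t := by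
  induction hΦ : Φ x generalizing x with
  | zero => exact ⟨{S x}, rfl, by simpa using ⟨x, hx, rfl⟩⟩
  | succ n ih =>
    obtain ⟨y, hy, hΦy, hxy⟩ := step x hx (by omega)
    obtain ⟨T, hT, hTy⟩ := ih hy (by omega)
    refine ⟨insert (S x) T, ?_, ?_⟩
    · rw [card_insert_of_notMem fun hmem => (hxy.trans_le (hTy _ hmem).1).false, hT]
    · simp only [mem_insert, forall_eq_or_imp]
      exact ⟨⟨le_rfl, x, hx, rfl⟩, fun t ht => ⟨hxy.le.trans (hTy t ht).1, (hTy t ht).2⟩⟩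

theorem sum_mem_genSum {G ι : Type*} [AddCommGroup G] [DecidableEq G] {r : ℕ} {A : Finset G}
    {s : Finset ι} {g : ι → G} (hg : ∀ i ∈ s, g i ∈ A) (hfib : ∀ x, #{i ∈ s | g i = x} ≤ r) :
    ∑ i ∈ s, g i ∈ genSum r #s A := by
  refine ⟨fun x => #{i ∈ s | g i = x}, hfib, fun x hx => ?_,
    (card_eq_sum_card_fiberwise hg).symm, ?_⟩
  · obtain ⟨i, hi⟩ := card_pos.1 (Nat.pos_of_ne_zero hx)
    rw [mem_filter] at hi
    exact hi.2 ▸ hg i hi.1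
  · rw [← sum_fiberwise_of_maps_to hg]
    exact sum_congr rfl fun x _ =>
      ((sum_congr rfl fun i hi => (mem_filter.1 hi).2).trans (sum_const x)).symm

theorem genSum_finite {G : Type*} [AddCommGroup G] (r h : ℕ) (A : Finset G) :
    (genSum r h A).Finite := by
  refine (Set.finite_range fun c : A → Fin (r + 1) => ∑ a : A, (c a : ℕ) • (a : G)).subset ?_
  rintro _ ⟨c, hc, -, -, rfl⟩
  exact ⟨fun a => ⟨c a, Nat.lt_succ_of_le (hc a)⟩, sum_coe_sort A fun a => c a • a⟩

theorem Nat.sum_range_mul_add_div {r n : ℕ} (hn : n ≤ r) (m : ℕ) :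
    ∑ j ∈ range n, (m * r + j) / r = n * m := by
  rw [sum_congr rfl fun j hj => ?_, sum_const, card_range, smul_eq_mul]
  have hjr : j < r := (mem_range.1 hj).trans_le hn
  rw [add_comm, mul_comm, Nat.add_mul_div_left _ _ (j.zero_le.trans_lt hjr),
    Nat.div_eq_of_lt hjr, zero_add]

theorem Nat.sum_range_mul_div (r m : ℕ) : ∑ u ∈ range (m * r), u / r = r * ∑ i ∈ range m, i := by
  induction m with
  | zero => simp
  | succ m ih =>
    rw [add_mul, one_mul, sum_range_add, ih, sum_range_mul_add_div le_rfl, sum_range_succ]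
    ring

theorem Nat.sum_range_mul_add_div_of_lt {r ε : ℕ} (hε : ε < r) (m : ℕ) :
    ∑ u ∈ range (m * r + ε), u / r = r * ∑ i ∈ range m, i + ε * m := by
  rw [sum_range_add, sum_range_mul_div, sum_range_mul_add_div hε.le]

/-- The `h - 1 - u` units above unit `u` need at least `(h - 1 - u) / r` positions above it. -/
def maxPos (r h k u : ℕ) : ℕ := k - 1 - (h - 1 - u) / r

/-- Unit `u < h` sits at position `p u`; at most `r` units share a position. -/
structure IsPlacement (r h k : ℕ) (p : ℕ → ℕ) : Prop where
  monotone : ∀ u v, u ≤ v → v < h → p u ≤ p v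
  lt_add : ∀ u, u + r < h → p u < p (u + r)
  le_maxPos : ∀ u < h, p u ≤ maxPos r h k u

def slack (r h k : ℕ) (p : ℕ → ℕ) : ℕ := ∑ u ∈ range h, (maxPos r h k u - p u)

section Placement

variable {r h k : ℕ} {p : ℕ → ℕ}

theorem maxPos_mono {u v : ℕ} (huv : u ≤ v) : maxPos r h k u ≤ maxPos r h k v :=
  Nat.sub_le_sub_left (Nat.div_le_div_right (by omega)) _

theorem maxPos_lt (hk : 0 < k) {u : ℕ} : maxPos r h k u < k :=
  (Nat.sub_le _ _).trans_lt (Nat.sub_lt hk one_pos)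

theorem lt_maxPos_add (hr : 0 < r) {w j : ℕ} (hw : w + r < h) (hj : j < maxPos r h k w) :
    j + 1 < maxPos r h k (w + r) := by
  have hdiv : (h - 1 - w) / r = (h - 1 - (w + r)) / r + 1 := by
    rw [show h - 1 - w = h - 1 - (w + r) + r * 1 by omega, Nat.add_mul_div_left _ _ hr]
  unfold maxPos at *
  omega

theorem div_add_div_sub_le (hr : 0 < r) (hhk : h ≤ r * k) {u : ℕ} (hu : u < h) :
    u / r + (h - 1 - u) / r ≤ k - 1 := by
  have hsum : (u / r + (h - 1 - u) / r) * r ≤ h - 1 := by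
    rw [add_mul]
    have := Nat.div_mul_le_self u r
    have := Nat.div_mul_le_self (h - 1 - u) r
    omega
  have hlt : (h - 1) / r < k := (Nat.div_lt_iff_lt_mul hr).2 (by rw [mul_comm]; omega)
  have := (Nat.le_div_iff_mul_le hr).2 hsum
  omega

theorem isPlacement_div (hr : 0 < r) (hhk : h ≤ r * k) : IsPlacement r h k (· / r) where
  monotone _ _ huv _ := Nat.div_le_div_right huv
  lt_add u _ := by rw [Nat.add_div_right u hr]; exact Nat.lt_succ_self _
  le_maxPos _ hu := Nat.le_sub_of_add_le (div_add_div_sub_le hr hhk hu)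

theorem IsPlacement.lt_of_add_le (hp : IsPlacement r h k p) {u v : ℕ} (huv : u + r ≤ v)
    (hv : v < h) : p u < p v :=
  (hp.lt_add u (by omega)).trans_le (hp.monotone _ _ huv hv)

theorem IsPlacement.update (hr : 0 < r) (hp : IsPlacement r h k p) {w : ℕ} (hw : w < h)
    (hlt : p w < maxPos r h k w) (habove : ∀ v, w < v → v < h → p v = maxPos r h k v) :
    IsPlacement r h k (Function.update p w (p w + 1)) where
  monotone u v huv hv := by
    simp only [Function.update_apply]
    split_ifs
    · omega
    · subst w
      rw [habove v (by omega) hv]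
      exact hlt.trans_le (maxPos_mono huv)
    · subst w
      exact (hp.monotone u v huv hv).trans (Nat.le_succ _)
    · exact hp.monotone u v huv hv
  lt_add u hu := by
    simp only [Function.update_apply]
    split_ifs
    · omega
    · subst w
      rw [habove (u + r) (by omega) hu]
      exact lt_maxPos_add hr hu hlt
    · subst w
      exact (hp.lt_add u hu).trans (Nat.lt_succ_self _)
    · exact hp.lt_add u hu
  le_maxPos u hu := by
    simp only [Function.update_apply]
    split_ifs with hwu
    · exact hwu ▸ hlt
    · exact hp.le_maxPos u hu

theorem IsPlacement.exists_update (hr : 0 < r) (hp : IsPlacement r h k p)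
    (hs : slack r h k p ≠ 0) :
    ∃ w < h, p w < maxPos r h k w ∧ IsPlacement r h k (Function.update p w (p w + 1)) := by
  have hne : ({u ∈ range h | p u < maxPos r h k u} : Finset ℕ).Nonempty := by
    by_contra hemp
    refine hs (sum_eq_zero fun u hu => Nat.sub_eq_zero_of_le (not_lt.1 fun hlt => hemp ?_))
    exact ⟨u, mem_filter.2 ⟨hu, hlt⟩⟩
  set w := ({u ∈ range h | p u < maxPos r h k u} : Finset ℕ).max' hne
  obtain ⟨hw, hlt⟩ := mem_filter.1 (max'_mem _ hne)
  refine ⟨w, mem_range.1 hw, hlt, hp.update hr (mem_range.1 hw) hlt fun v hwv hv => ?_⟩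
  refine le_antisymm (hp.le_maxPos v hv) (not_lt.1 fun hv' => ?_)
  exact hwv.not_ge (le_max' _ v (mem_filter.2 ⟨mem_range.2 hv, hv'⟩))

theorem slack_update {w : ℕ} (hw : w < h) (hlt : p w < maxPos r h k w) :
    slack r h k (Function.update p w (p w + 1)) + 1 = slack r h k p := by
  have := sum_apply_update_add (mem_range.2 hw) (fun u j => maxPos r h k u - j) p (p w + 1)
  unfold slack
  omega

variable {G : Type*} [AddCommGroup G] [LinearOrder G] {a : ℕ → G}

theorem IsPlacement.sum_mem_genSum {A : Finset G} (ha : StrictMonoOn a (Set.Iio k))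
    (haA : ∀ i < k, a i ∈ A) (hk : 0 < k) (hp : IsPlacement r h k p) :
    ∑ u ∈ range h, a (p u) ∈ genSum r h A := by
  have hpk : ∀ u < h, p u < k := fun u hu => (hp.le_maxPos u hu).trans_lt (maxPos_lt hk)
  have hfib (x : G) : #{u ∈ range h | a (p u) = x} ≤ r := by
    refine card_le_of_forall_lt_add fun u hu v hv => not_le.1 fun huv => ?_
    simp only [mem_filter, mem_range] at hu hv
    have := ha (hpk u hu.1) (hpk v hv.1) (hp.lt_of_add_le huv hv.1)
    rw [hu.2, hv.2] at this
    exact this.false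
  simpa using _root_.sum_mem_genSum (fun u hu => haA _ (hpk u (mem_range.1 hu))) hfib

variable [IsOrderedAddMonoid G]

theorem sum_lt_sum_update (ha : StrictMonoOn a (Set.Iio k)) {w : ℕ} (hw : w < h)
    (hwk : p w + 1 < k) :
    ∑ u ∈ range h, a (p u) < ∑ u ∈ range h, a (Function.update p w (p w + 1) u) := by
  have := sum_apply_update_add (mem_range.2 hw) (fun _ j => a j) p (p w + 1)
  have hstep : a (p w) < a (p w + 1) := ha (Set.mem_Iio.2 (by omega)) hwk (Nat.lt_succ_self _)
  refine lt_of_add_lt_add_right (a := a (p w)) ?_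
  rw [this]
  exact add_lt_add_right hstep _

theorem IsPlacement.slack_add_one_le_ncard {A : Finset G} (hr : 0 < r)
    (ha : StrictMonoOn a (Set.Iio k)) (haA : ∀ i < k, a i ∈ A) (hk : 0 < k)
    (hp : IsPlacement r h k p) : slack r h k p + 1 ≤ (genSum r h A).ncard := by
  have hstep (q : ℕ → ℕ) (hq : IsPlacement r h k q) (hs : slack r h k q ≠ 0) :
      ∃ q', IsPlacement r h k q' ∧ slack r h k q' + 1 = slack r h k q ∧
        ∑ u ∈ range h, a (q u) < ∑ u ∈ range h, a (q' u) := by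
    obtain ⟨w, hw, hlt, hq'⟩ := hq.exists_update hr hs
    exact ⟨_, hq', slack_update hw hlt,
      sum_lt_sum_update ha hw ((Nat.succ_le_of_lt hlt).trans_lt (maxPos_lt hk))⟩
  obtain ⟨T, hT, hTmem⟩ := exists_finset_card_eq_of_forall_exists_step _ _ hstep hp
  rw [← hT, ← Set.ncard_coe_finset]
  refine Set.ncard_le_ncard (fun t ht => ?_) (genSum_finite r h A)
  obtain ⟨-, q, hq, rfl⟩ := hTmem t ht
  exact hq.sum_mem_genSum ha haA hk

end Placement

theorem slack_div_add_two_mul {r h k : ℕ} (hr : 0 < r) (hhk : h ≤ r * k) :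
    slack r h k (· / r) + 2 * ∑ u ∈ range h, u / r = h * (k - 1) := by
  have hpt : ∀ u ∈ range h, maxPos r h k u - u / r + u / r + (h - 1 - u) / r = k - 1 :=
    fun u hu => by
      have := div_add_div_sub_le hr hhk (mem_range.1 hu)
      unfold maxPos
      generalize u / r = x, (h - 1 - u) / r = y at *
      omega
  calc slack r h k (· / r) + 2 * ∑ u ∈ range h, u / r
      = ∑ u ∈ range h, (maxPos r h k u - u / r) + ∑ u ∈ range h, u / r
          + ∑ u ∈ range h, (h - 1 - u) / r := by
        rw [sum_range_reflect (fun u => u / r) h, slack]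
        ring
    _ = h * (k - 1) := by
        rw [← sum_add_distrib, ← sum_add_distrib, sum_congr rfl hpt]
        simp

theorem stmt1_general (A : Finset ℤ) (k h m r ε : ℕ)
    (hA : A.Nonempty) (hk : A.card = k) (hr : 1 ≤ r)
    (hh : h = m * r + ε) (hε : ε ≤ r - 1)
    (h2 : h ≤ r * k) :
    ((genSum r h A).ncard : ℤ) ≥
      (h : ℤ) * k - (m : ℤ) ^ 2 * r + 1 - 2 * m * ε - ε := by
  subst hh hk
  obtain ⟨a, ha, haA⟩ := A.exists_strictMonoOn_mem
  have hA1 : 1 ≤ #A := card_pos.2 hA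
  have hcard := (isPlacement_div hr h2).slack_add_one_le_ncard hr ha haA hA1
  have hslack := slack_div_add_two_mul hr h2
  rw [Nat.sum_range_mul_add_div_of_lt (by omega)] at hslack
  have hgauss : (∑ i ∈ range m, i) * 2 + m = m * m := by
    rw [sum_range_id_mul_two]
    cases m <;> simp [Nat.mul_succ]
  zify [hA1] at hcard hslack hgauss
  push_cast
  linear_combination hcard - hslack + r * hgauss

theorem stmt1 (A : Finset ℤ) (k h m r ε : ℕ)
    (hA : A.Nonempty) (hk : A.card = k) (hr : 1 ≤ r)
    (hh : h = m * r + ε) (hε : ε ≤ r - 1)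
    (h1 : 1 ≤ h) (h2 : h ≤ r * k) :
    ((genSum r h A).ncard : ℤ) ≥
      (h : ℤ) * k - (m : ℤ) ^ 2 * r + 1 - 2 * m * ε - ε :=
  stmt1_general A k h m r ε hA hk hr hh hε h2
end

section
/- Let A be a finite set of integers with |A| = k and r ≥ 1, with m + ε ≤ k where h = m·r + ε, 1 ≤ ε ≤ r−1. Then (r−1)·(m^∧A) + (m+ε)^∧A ⊆ h^(r)A. -/
/-! Counting functions add under sumset addition, so `(r - 1)` sums of `m` distinct elements
plus one sum of `m + ε` distinct elements use each element at most `r` times and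
`(r - 1) * m + (m + ε) = h` elements in total. -/

open Finset Pointwise

section GenSum

variable {G : Type*} [AddCommGroup G] {A : Finset G}

theorem zero_mem_genSum (r : ℕ) : (0 : G) ∈ genSum r 0 A :=
  ⟨0, fun _ => Nat.zero_le r, fun _ ha => absurd rfl ha, by simp, by simp⟩

theorem genSum_add_subset (r s h k : ℕ) :
    genSum r h A + genSum s k A ⊆ genSum (r + s) (h + k) A := by
  rintro _ ⟨_, ⟨c, hcr, hcA, hch, rfl⟩, _, ⟨d, hds, hdA, hdk, rfl⟩, rfl⟩
  refine ⟨c + d, fun a => add_le_add (hcr a) (hds a), fun a ha => ?_, ?_, ?_⟩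
  · by_cases hc : c a = 0
    · exact hdA a (by simpa [hc] using ha)
    · exact hcA a hc
  · simp only [Pi.add_apply, sum_add_distrib, hch, hdk]
  · simp only [Pi.add_apply, add_smul, sum_add_distrib]

theorem iterSum_genSum_subset (n r h : ℕ) :
    iterSum n (genSum r h A) ⊆ genSum (n * r) (n * h) A := by
  induction n with
  | zero =>
    rintro _ ⟨f, -, rfl⟩
    simpa using zero_mem_genSum (A := A) 0
  | succ n ih =>
    rintro _ ⟨f, hf, rfl⟩
    rw [Fin.sum_univ_succ, Nat.succ_mul, Nat.succ_mul, add_comm (n * r), add_comm (n * h)]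
    exact genSum_add_subset r (n * r) h (n * h)
      (Set.add_mem_add (hf 0) (ih ⟨fun i => f i.succ, fun i => hf i.succ, rfl⟩))

end GenSum

theorem stmt5_general (A : Finset ℤ) (h m r ε : ℕ)
    (hr : 1 ≤ r) (hh : h = m * r + ε) :
    iterSum (r - 1) (genSum 1 m A) + genSum 1 (m + ε) A ⊆ genSum r h A := by
  have hcount : (r - 1) * 1 + 1 = r := by omega
  have hsize : (r - 1) * m + (m + ε) = h := by
    obtain ⟨s, rfl⟩ := Nat.exists_eq_add_of_le hr
    simp only [hh, Nat.add_sub_cancel_left]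
    ring
  calc iterSum (r - 1) (genSum 1 m A) + genSum 1 (m + ε) A
      ⊆ genSum ((r - 1) * 1) ((r - 1) * m) A + genSum 1 (m + ε) A :=
        Set.add_subset_add_right (iterSum_genSum_subset _ _ _)
    _ ⊆ genSum r h A := by
        simpa only [hcount, hsize] using
          genSum_add_subset (A := A) ((r - 1) * 1) 1 ((r - 1) * m) (m + ε)

theorem stmt5 (A : Finset ℤ) (k h m r ε : ℕ)
    (hA : A.card = k) (hr : 1 ≤ r) (hh : h = m * r + ε)
    (hε1 : 1 ≤ ε) (hε2 : ε ≤ r - 1) (hmk : m + ε ≤ k) :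
    iterSum (r - 1) (genSum 1 m A) + genSum 1 (m + ε) A ⊆ genSum r h A :=
  stmt5_general A h m r ε hr hh
end

section
/- Let k ≥ 5 and let r, h be integers with h = m·r + ε, 0 ≤ ε ≤ r−1, and 2 ≤ r ≤ h ≤ r·k − 2. If A is a set of k integers with |h^(r)A| = h·k − m²·r + 1 − 2·m·ε − ε, then A is a k-term arithmetic progression. -/
open Finset Pointwise

/-!
Write `A = {b₀ < ⋯ < b_{k-1}}` and encode an element of `h^(r)A` by its multiplicity vector `c`
(entries at most `r`, summing to `h`). Moving one unit from `b_{j+1}` down to `b_j` strictly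
decreases the sum and decreases the potential `∑ i c_i` by one, and such a move is available
unless `c` is the packed vector `(r, …, r, ε, 0, …, 0)`, the unique vector of least potential.
So below any `c` there are `∑ i c_i - P + 1` distinct sums, `P` the least potential, and by the
symmetry `i ↦ k - 1 - i` above any `c'` there are `(k - 1) h - ∑ i c'_i - P + 1` of them. If `A` is
not an arithmetic progression, some `b_j + b_{j+2} ≠ 2 b_{j+1}`, and the vectors `w + 2 e_{j+1}`
and `w + e_j + e_{j+2}` have equal potential but different sums. The chains below the smaller
and above the larger are disjoint, giving `(k - 1) h - 2P + 2` sums: one more than assumed.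
-/

theorem exists_finset_card_ge_of_descent {α : Type*} {P : α → Prop} {f φ : α → ℤ} {φ₀ : ℤ}
    (hstep : ∀ c, P c → φ₀ < φ c → ∃ c', P c' ∧ φ c' = φ c - 1 ∧ f c' < f c)
    {c : α} (hc : P c) :
    ∃ S : Finset ℤ, ↑S ⊆ f '' {c | P c} ∧ (∀ x ∈ S, x ≤ f c) ∧ φ c - φ₀ + 1 ≤ #S := by
  suffices key : ∀ n : ℕ, ∀ c, P c → φ c - φ₀ ≤ n →
      ∃ S : Finset ℤ, ↑S ⊆ f '' {c | P c} ∧ (∀ x ∈ S, x ≤ f c) ∧ φ c - φ₀ + 1 ≤ #S from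
    key _ c hc (Int.self_le_toNat _)
  intro n
  induction n with
  | zero =>
    intro c hc hn
    refine ⟨{f c}, by simpa using ⟨c, hc, rfl⟩, by simp, ?_⟩
    simp only [card_singleton, Nat.cast_one]
    omega
  | succ n ih =>
    intro c hc hn
    by_cases hle : φ c - φ₀ ≤ n
    · exact ih c hc hle
    obtain ⟨c', hc', hφ, hf⟩ := hstep c hc (by omega)
    obtain ⟨S, hSf, hSle, hScard⟩ := ih c' hc' (by omega)
    have hnotin : f c ∉ S := fun hmem => (hSle _ hmem).not_gt hf
    refine ⟨insert (f c) S, ?_, ?_, ?_⟩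
    · rw [coe_insert]
      exact Set.insert_subset ⟨c, hc, rfl⟩ hSf
    · simp only [mem_insert, forall_eq_or_imp, le_refl, true_and]
      exact fun x hx => (hSle x hx).trans hf.le
    · rw [card_insert_of_notMem hnotin]
      push_cast
      omega

namespace RestrictedSum

/-- `c i` is the multiplicity of the `i`-th smallest element; only the indices `i < k` count. -/
def IsConfig (k r h : ℕ) (c : ℕ → ℕ) : Prop :=
  (∀ i, c i ≤ r) ∧ ∑ i ∈ range k, c i = h

def weightedSum (k : ℕ) (w : ℕ → ℤ) (c : ℕ → ℕ) : ℤ :=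
  ∑ i ∈ range k, (c i : ℤ) * w i

def potential (k : ℕ) (c : ℕ → ℕ) : ℤ :=
  weightedSum k (fun i => i) c

def configValues (k r h : ℕ) (b : ℕ → ℤ) : Set ℤ :=
  weightedSum k b '' {c | IsConfig k r h c}

/-- The configuration `(r, …, r, ε, 0, …, 0)`, where `h = m r + ε`. -/
def packed (r h : ℕ) : ℕ → ℕ :=
  fun i => min r (h - r * i)

variable {k r h : ℕ} {b : ℕ → ℤ}

theorem weightedSum_add (w : ℕ → ℤ) (c d : ℕ → ℕ) :
    weightedSum k w (c + d) = weightedSum k w c + weightedSum k w d := by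
  simp only [weightedSum, Pi.add_apply, Nat.cast_add, add_mul, sum_add_distrib]

theorem weightedSum_single {j : ℕ} (hj : j < k) (w : ℕ → ℤ) (n : ℕ) :
    weightedSum k w (Pi.single j n) = n * w j := by
  simp [weightedSum, Pi.single_apply, hj]

theorem sum_single {j : ℕ} (hj : j < k) (n : ℕ) : ∑ i ∈ range k, Pi.single j n i = n := by
  simp [Pi.single_apply, hj]

def lowerAt (c : ℕ → ℕ) (j : ℕ) : ℕ → ℕ :=
  c - Pi.single (j + 1) 1 + Pi.single j 1

theorem lowerAt_add_single {c : ℕ → ℕ} {j : ℕ} (hc : 1 ≤ c (j + 1)) :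
    lowerAt c j + Pi.single (j + 1) 1 = c + Pi.single j 1 := by
  ext i
  simp only [lowerAt, Pi.add_apply, Pi.sub_apply, Pi.single_apply]
  split_ifs <;> subst_vars <;> omega

theorem isConfig_lowerAt {c : ℕ → ℕ} (hc : IsConfig k r h c) {j : ℕ} (hjk : j + 1 < k)
    (hj1 : 1 ≤ c (j + 1)) (hj : c j < r) : IsConfig k r h (lowerAt c j) := by
  constructor
  · intro i
    have := hc.1 i
    simp only [lowerAt, Pi.add_apply, Pi.sub_apply, Pi.single_apply]
    split_ifs <;> subst_vars <;> omega
  · have hsum := congrArg (fun d => ∑ i ∈ range k, d i) (lowerAt_add_single hj1)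
    simp only [Pi.add_apply, sum_add_distrib, sum_single hjk, sum_single (by omega : j < k),
      hc.2] at hsum
    omega

theorem weightedSum_lowerAt {c : ℕ → ℕ} {j : ℕ} (hjk : j + 1 < k) (hj1 : 1 ≤ c (j + 1))
    (w : ℕ → ℤ) : weightedSum k w (lowerAt c j) = weightedSum k w c + w j - w (j + 1) := by
  have hsum := congrArg (weightedSum k w) (lowerAt_add_single hj1)
  simp only [weightedSum_add, weightedSum_single hjk, weightedSum_single (by omega : j < k),
    Nat.cast_one, one_mul] at hsum
  linarith

theorem sum_range_eq_mul_of_forall_eq {c : ℕ → ℕ} {i : ℕ} (hc : ∀ j < i, c j = r) :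
    ∑ j ∈ range i, c j = r * i := by
  rw [sum_congr rfl fun j hj => hc j (mem_range.1 hj), sum_const, card_range, smul_eq_mul,
    mul_comm]

theorem eq_of_lt_of_one_le {c : ℕ → ℕ} (hc : ∀ i, c i ≤ r)
    (hdown : ∀ j, j + 1 < k → 1 ≤ c (j + 1) → c j = r) :
    ∀ i < k, 1 ≤ c i → ∀ j < i, c j = r := by
  intro i
  induction i with
  | zero => intro _ _ j hj; omega
  | succ i ih =>
    intro hik hi j hj
    have hci : c i = r := hdown i hik hi
    rcases Nat.lt_succ_iff_lt_or_eq.1 hj with hj | rfl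
    · exact ih (by omega) (by have := hc (i + 1); omega) j hj
    · exact hci

theorem IsConfig.eq_packed {c : ℕ → ℕ} (hc : IsConfig k r h c)
    (hdown : ∀ j, j + 1 < k → 1 ≤ c (j + 1) → c j = r) : ∀ i < k, c i = packed r h i := by
  have hfull := eq_of_lt_of_one_le hc.1 hdown
  intro i hi
  have hsplit : ∑ j ∈ range i, c j + c i + ∑ j ∈ Ico (i + 1) k, c j = h := by
    rw [← sum_range_succ, sum_range_add_sum_Ico _ (by omega), hc.2]
  have hbelow : ∑ j ∈ range i, c j ≤ r * i := by
    simpa [mul_comm] using sum_le_card_nsmul (range i) c r fun j _ => hc.1 j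
  have hci := hc.1 i
  simp only [packed]
  -- A nonzero entry above `i` forces every entry up to `i` to be full.
  by_cases htail : ∑ j ∈ Ico (i + 1) k, c j = 0
  · by_cases hpos : 1 ≤ c i
    · have := sum_range_eq_mul_of_forall_eq (hfull i hi hpos)
      generalize r * i = s at *
      omega
    · generalize r * i = s at *
      omega
  · obtain ⟨j, hj, hcj⟩ := exists_ne_zero_of_sum_ne_zero htail
    rw [mem_Ico] at hj
    have hfull_j := hfull j hj.2 (by omega)
    have := sum_range_eq_mul_of_forall_eq (i := i) fun l hl => hfull_j l (by omega)
    have := hfull_j i (by omega)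
    have : c j ≤ ∑ l ∈ Ico (i + 1) k, c l :=
      single_le_sum (fun _ _ => Nat.zero_le _) (mem_Ico.2 hj)
    generalize r * i = s at *
    omega

theorem two_mul_potential_packed {m ε : ℕ} (hh : h = m * r + ε) (hε : ε < r) (hm : m < k) :
    2 * potential k (packed r h) = r * m * (m - 1) + 2 * m * ε := by
  have hzero : ∀ i ∈ Ico (m + 1) k, (packed r h i : ℤ) * i = 0 := by
    intro i hi
    have : r * (m + 1) ≤ r * i := Nat.mul_le_mul_left r (mem_Ico.1 hi).1
    have : packed r h i = 0 := by simp only [packed]; rw [Nat.sub_eq_zero_of_le (by linarith)]; simp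
    simp [this]
  have hfull : ∀ i ∈ range m, (packed r h i : ℤ) * i = r * i := by
    intro i hi
    have : r * (i + 1) ≤ r * m := Nat.mul_le_mul_left r (mem_range.1 hi)
    have : packed r h i = r := by
      simp only [packed]
      apply min_eq_left
      apply Nat.le_sub_of_add_le
      nlinarith
    simp [this]
  have hlast : packed r h m = ε := by simp only [packed]; rw [hh, mul_comm]; simp; omega
  have hgauss : 2 * ∑ i ∈ range m, (i : ℤ) = m * (m - 1) := by
    have := Finset.sum_range_id_mul_two m
    rcases Nat.eq_zero_or_pos m with rfl | hm0
    · simp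
    · zify [hm0] at this
      linarith
  unfold potential weightedSum
  rw [← sum_range_add_sum_Ico _ (by omega : m + 1 ≤ k), sum_eq_zero hzero, add_zero,
    sum_range_succ, sum_congr rfl hfull, ← mul_sum, hlast]
  linear_combination (r : ℤ) * hgauss

theorem IsConfig.exists_finset_le (hb : StrictMonoOn b (Set.Iio k)) {c : ℕ → ℕ}
    (hc : IsConfig k r h c) :
    ∃ S : Finset ℤ, ↑S ⊆ configValues k r h b ∧ (∀ x ∈ S, x ≤ weightedSum k b c) ∧
      potential k c - potential k (packed r h) + 1 ≤ #S := by
  refine exists_finset_card_ge_of_descent (fun c hc hlt => ?_) hc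
  obtain ⟨j, hjk, hj1, hj⟩ : ∃ j, j + 1 < k ∧ 1 ≤ c (j + 1) ∧ c j < r := by
    by_contra! hnone
    have hpacked := hc.eq_packed fun j hjk hj1 => (hc.1 j).antisymm (hnone j hjk hj1)
    have : potential k c = potential k (packed r h) := by
      unfold potential weightedSum
      exact sum_congr rfl fun i hi => by rw [hpacked i (mem_range.1 hi)]
    omega
  refine ⟨lowerAt c j, isConfig_lowerAt hc hjk hj1 hj, ?_, ?_⟩
  · simp only [potential, weightedSum_lowerAt hjk hj1]
    push_cast
    ring
  · rw [weightedSum_lowerAt hjk hj1]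
    have : b j < b (j + 1) := hb (by simp; omega) (by simpa using hjk) (by omega)
    linarith

def reflect (k : ℕ) (c : ℕ → ℕ) : ℕ → ℕ :=
  fun i => c (k - 1 - i)

theorem weightedSum_reflect (w : ℕ → ℤ) (c : ℕ → ℕ) :
    weightedSum k w (reflect k c) = weightedSum k (fun i => w (k - 1 - i)) c := by
  unfold weightedSum reflect
  rw [← sum_range_reflect]
  exact sum_congr rfl fun i hi => by rw [Nat.sub_sub_self (by simp at hi; omega)]

theorem weightedSum_congr {w w' : ℕ → ℤ} (hw : ∀ i < k, w i = w' i) (c : ℕ → ℕ) :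
    weightedSum k w c = weightedSum k w' c :=
  sum_congr rfl fun i hi => by rw [hw i (mem_range.1 hi)]

theorem weightedSum_neg (w : ℕ → ℤ) (c : ℕ → ℕ) :
    weightedSum k (-w) c = -weightedSum k w c := by
  simp [weightedSum]

theorem isConfig_reflect {c : ℕ → ℕ} (hc : IsConfig k r h c) :
    IsConfig k r h (reflect k c) :=
  ⟨fun i => hc.1 _, by simp only [reflect]; rw [sum_range_reflect, hc.2]⟩

theorem potential_reflect {c : ℕ → ℕ} (hc : IsConfig k r h c) :
    potential k (reflect k c) = ((k : ℤ) - 1) * h - potential k c := by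
  have hsum : ∑ i ∈ range k, (c i : ℤ) = h := by exact_mod_cast hc.2
  have hw : ∀ i < k, ((k - 1 - i : ℕ) : ℤ) = (k : ℤ) - 1 - i := fun i hi => by omega
  rw [potential, weightedSum_reflect, weightedSum_congr hw]
  simp only [potential, weightedSum, mul_sub, sum_sub_distrib, ← sum_mul, hsum]
  ring

theorem IsConfig.exists_finset_ge (hb : StrictMonoOn b (Set.Iio k)) {c : ℕ → ℕ}
    (hc : IsConfig k r h c) :
    ∃ S : Finset ℤ, ↑S ⊆ configValues k r h b ∧ (∀ x ∈ S, weightedSum k b c ≤ x) ∧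
      ((k : ℤ) - 1) * h - potential k c - potential k (packed r h) + 1 ≤ #S := by
  -- Ascending chains for `b` are descending chains for `b` reversed and negated.
  set b' : ℕ → ℤ := -fun i => b (k - 1 - i) with hb'
  have hb'mono : StrictMonoOn b' (Set.Iio k) := by
    intro i hi j hj hij
    simp only [Set.mem_Iio] at hi hj
    simpa [hb'] using hb (by simp; omega) (by simp; omega) (by omega : k - 1 - j < k - 1 - i)
  have hvalue : ∀ d, weightedSum k b' d = -weightedSum k b (reflect k d) := by
    intro d
    rw [hb', weightedSum_neg, weightedSum_reflect]
  obtain ⟨S, hS, hSle, hScard⟩ := (isConfig_reflect hc).exists_finset_le hb'mono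
  refine ⟨S.image Neg.neg, ?_, ?_, ?_⟩
  · rw [coe_image]
    rintro _ ⟨x, hx, rfl⟩
    obtain ⟨d, hd, rfl⟩ := hS hx
    exact ⟨reflect k d, isConfig_reflect hd, by rw [hvalue, neg_neg]⟩
  · have hc' : weightedSum k b (reflect k (reflect k c)) = weightedSum k b c := by
      rw [weightedSum_reflect, weightedSum_reflect]
      exact weightedSum_congr (fun i hi => by rw [Nat.sub_sub_self (by omega)]) c
    simp only [mem_image, forall_exists_index, and_imp, forall_apply_eq_imp_iff₂]
    intro x hx
    have := hSle x hx
    rw [hvalue, hc'] at this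
    linarith
  · rw [card_image_of_injective _ neg_injective, potential_reflect hc] at *
    linarith

theorem configValues_finite (k r h : ℕ) (b : ℕ → ℤ) : (configValues k r h b).Finite := by
  refine (Set.finite_Icc (-(r * ∑ i ∈ range k, |b i|)) (r * ∑ i ∈ range k, |b i|)).subset ?_
  rintro _ ⟨c, hc, rfl⟩
  refine abs_le.1 ((abs_sum_le_sum_abs _ _).trans ?_)
  rw [mul_sum]
  refine sum_le_sum fun i _ => ?_
  rw [abs_mul, Nat.abs_cast]
  exact mul_le_mul_of_nonneg_right (by exact_mod_cast hc.1 i) (abs_nonneg _)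

theorem add_two_le_ncard_configValues (hb : StrictMonoOn b (Set.Iio k)) {c c' : ℕ → ℕ}
    (hc : IsConfig k r h c) (hc' : IsConfig k r h c') (hpot : potential k c = potential k c')
    (hne : weightedSum k b c ≠ weightedSum k b c') :
    ((k : ℤ) - 1) * h + 2 ≤ 2 * potential k (packed r h) + (configValues k r h b).ncard := by
  wlog hlt : weightedSum k b c < weightedSum k b c' generalizing c c'
  · exact this hc' hc hpot.symm hne.symm (hne.symm.lt_of_le (not_lt.1 hlt))
  obtain ⟨S, hS, hSle, hScard⟩ := hc.exists_finset_le hb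
  obtain ⟨S', hS', hS'ge, hS'card⟩ := hc'.exists_finset_ge hb
  have hdisj : Disjoint S S' := disjoint_left.2 fun x hx hx' =>
    ((hSle x hx).trans_lt hlt).not_ge (hS'ge x hx')
  have hsub : ↑(S ∪ S') ⊆ configValues k r h b := by
    rw [coe_union]
    exact Set.union_subset hS hS'
  have hcard : #(S ∪ S') ≤ (configValues k r h b).ncard := by
    rw [← Set.ncard_coe_finset]
    exact Set.ncard_le_ncard hsub (configValues_finite k r h b)
  rw [card_union_of_disjoint hdisj] at hcard
  linarith

theorem exists_le_sum_eq (caps : ℕ → ℕ) {t : ℕ} (ht : t ≤ ∑ i ∈ range k, caps i) :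
    ∃ w ≤ caps, ∑ i ∈ range k, w i = t := by
  induction t with
  | zero => exact ⟨0, fun i => Nat.zero_le _, by simp⟩
  | succ t ih =>
    obtain ⟨w, hw, hsum⟩ := ih (by omega)
    obtain ⟨i, hi, hlt⟩ : ∃ i ∈ range k, w i < caps i := by
      by_contra! hle
      have := sum_le_sum hle
      omega
    refine ⟨w + Pi.single i 1, fun l => ?_, ?_⟩
    · have := hw l
      simp only [Pi.add_apply, Pi.single_apply]
      split_ifs <;> subst_vars <;> omega
    · simp only [Pi.add_apply]
      rw [sum_add_distrib, sum_single (mem_range.1 hi), hsum]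

theorem exists_isConfig_pair (hr : 2 ≤ r) (hh : 2 ≤ h) (hhk : h + 2 ≤ r * k) {j : ℕ}
    (hj : j + 2 < k) :
    ∃ c c', IsConfig k r h c ∧ IsConfig k r h c' ∧
      ∀ w, weightedSum k w c + (w j + w (j + 2)) = weightedSum k w c' + 2 * w (j + 1) := by
  set e : ℕ → ℕ := Pi.single (j + 1) 2
  set e' : ℕ → ℕ := Pi.single j 1 + Pi.single (j + 2) 1
  have hee' : ∀ i, e i + e' i ≤ 2 := by
    intro i
    simp only [e, e', Pi.add_apply, Pi.single_apply]
    split_ifs <;> omega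
  have hsum_e : ∑ i ∈ range k, e i = 2 := sum_single (by omega) 2
  have hsum_e' : ∑ i ∈ range k, e' i = 2 := by
    simp only [e', Pi.add_apply, sum_add_distrib, sum_single (by omega : j < k), sum_single hj]
  set caps : ℕ → ℕ := fun i => r - (e i + e' i)
  have hcaps : ∑ i ∈ range k, caps i + 4 = r * k := by
    have : ∑ i ∈ range k, (caps i + (e i + e' i)) = r * k := by
      rw [sum_congr rfl fun i _ => Nat.sub_add_cancel ((hee' i).trans hr)]
      simp [mul_comm]
    rw [sum_add_distrib, sum_add_distrib, hsum_e, hsum_e'] at this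
    omega
  obtain ⟨w, hw, hwsum⟩ := exists_le_sum_eq (k := k) caps (t := h - 2) (by omega)
  refine ⟨w + e, w + e', ⟨fun i => ?_, ?_⟩, ⟨fun i => ?_, ?_⟩, fun v => ?_⟩
  · have := hw i; have := hee' i
    simp only [Pi.add_apply, caps] at *
    omega
  · simp only [Pi.add_apply]
    rw [sum_add_distrib, hwsum, hsum_e]
    omega
  · have := hw i; have := hee' i
    simp only [Pi.add_apply, caps] at *
    omega
  · simp only [Pi.add_apply]
    rw [sum_add_distrib, hwsum, hsum_e']
    omega
  · simp only [e, e', weightedSum_add, weightedSum_single (by omega : j + 1 < k),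
      weightedSum_single (by omega : j < k), weightedSum_single hj]
    push_cast
    ring

theorem add_two_le_ncard_configValues_of_ne (hb : StrictMonoOn b (Set.Iio k)) (hr : 2 ≤ r)
    (hh : 2 ≤ h) (hhk : h + 2 ≤ r * k) {j : ℕ} (hj : j + 2 < k)
    (hne : b j + b (j + 2) ≠ 2 * b (j + 1)) :
    ((k : ℤ) - 1) * h + 2 ≤ 2 * potential k (packed r h) + (configValues k r h b).ncard := by
  obtain ⟨c, c', hc, hc', hw⟩ := exists_isConfig_pair hr hh hhk hj
  refine add_two_le_ncard_configValues hb hc hc' ?_ fun heq => hne ?_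
  · have := hw fun i => i
    push_cast at this
    simp only [potential]
    linarith
  · linarith [hw b]

theorem genSum_image_eq_configValues (hb : Set.InjOn b (Set.Iio k)) :
    genSum r h ((range k).image b) = configValues k r h b := by
  have hinj : ∀ i ∈ range k, ∀ j ∈ range k, b i = b j → i = j := fun i hi j hj hij =>
    hb (by simpa using hi) (by simpa using hj) hij
  ext x
  constructor
  · rintro ⟨C, hCr, -, hCsum, rfl⟩
    refine ⟨C ∘ b, ⟨fun i => hCr _, ?_⟩, ?_⟩
    · rw [← hCsum, sum_image hinj]
      rfl
    · simp only [weightedSum, sum_image hinj, nsmul_eq_mul, Function.comp]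
  · rintro ⟨c, hc, rfl⟩
    have hleft : ∀ i ∈ range k, Function.invFunOn b (Set.Iio k) (b i) = i := fun i hi =>
      hb.leftInvOn_invFunOn (by simpa using hi)
    let C : ℤ → ℕ := fun a => if a ∈ (range k).image b then c (Function.invFunOn b (Set.Iio k) a)
      else 0
    have hCb : ∀ i ∈ range k, C (b i) = c i := fun i hi => by
      simp only [C, mem_image_of_mem b hi, if_true, hleft i hi]
    refine ⟨C, fun a => ?_, fun a ha => ?_, ?_, ?_⟩
    · simp only [C]
      split_ifs
      exacts [hc.1 _, Nat.zero_le _]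
    · by_contra hnot
      exact ha (if_neg hnot)
    · rw [sum_image hinj, sum_congr rfl hCb, hc.2]
    · rw [sum_image hinj, weightedSum]
      exact sum_congr rfl fun i hi => by rw [hCb i hi, nsmul_eq_mul]

theorem eq_add_mul_of_add_eq_two_mul (hb : ∀ j, j + 2 < k → b j + b (j + 2) = 2 * b (j + 1)) :
    ∀ i < k, b i = b 0 + (b 1 - b 0) * i := by
  intro i
  induction i using Nat.twoStepInduction with
  | zero => simp
  | one => simp
  | more i ih ih1 =>
    intro hi
    have := hb i hi
    rw [ih (by omega), ih1 (by omega)] at this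
    push_cast at this ⊢
    linarith

end RestrictedSum

theorem Finset.exists_strictMonoOn_image_range_eq {α : Type*} [LinearOrder α] [Inhabited α]
    (A : Finset α) {k : ℕ} (hA : #A = k) :
    ∃ b : ℕ → α, StrictMonoOn b (Set.Iio k) ∧ (range k).image b = A := by
  refine ⟨fun i => if hi : i < k then A.orderEmbOfFin hA ⟨i, hi⟩ else default, ?_, ?_⟩
  · intro i hi j hj hij
    simp only [Set.mem_Iio] at hi hj
    simpa [hi, hj] using hij
  · ext a
    simp only [mem_image, mem_range]
    constructor
    · rintro ⟨i, hi, rfl⟩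
      simp [hi]
    · intro ha
      obtain ⟨⟨i, hi⟩, rfl⟩ : a ∈ Set.range (A.orderEmbOfFin hA) := by
        rwa [range_orderEmbOfFin]
      exact ⟨i, hi, by simp [hi]⟩

theorem stmt7_general (A : Finset ℤ) (k h m r ε : ℕ)
    (hA : A.card = k)
    (hh : h = m * r + ε) (hε : ε ≤ r - 1)
    (hr : 2 ≤ r) (hrh : r ≤ h) (h2 : h ≤ r * k - 2)
    (heq : ((genSum r h A).ncard : ℤ) =
      (h : ℤ) * k - (m : ℤ) ^ 2 * r + 1 - 2 * m * ε - ε) :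
    ∃ a d : ℤ, 0 < d ∧ A = (Finset.range k).image fun i : ℕ => a + d * (i : ℤ) := by
  obtain ⟨b, hb, rfl⟩ := A.exists_strictMonoOn_image_range_eq hA
  have hhk : h + 2 ≤ r * k := by omega
  have hk : 2 ≤ k := by nlinarith
  have hm : m < k := by nlinarith
  by_cases hap : ∀ j, j + 2 < k → b j + b (j + 2) = 2 * b (j + 1)
  · refine ⟨b 0, b 1 - b 0, sub_pos.2 (hb (by simp; omega) (by simp; omega) one_pos), ?_⟩
    exact image_congr fun i hi =>
      RestrictedSum.eq_add_mul_of_add_eq_two_mul hap i (by simpa using hi)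
  · obtain ⟨j, hj, hne⟩ := not_forall₂.1 hap
    have hbound := RestrictedSum.add_two_le_ncard_configValues_of_ne hb hr (by omega) hhk hj hne
    rw [← RestrictedSum.genSum_image_eq_configValues hb.injOn, heq] at hbound
    have hpacked := RestrictedSum.two_mul_potential_packed hh (by omega) hm
    subst hh
    push_cast at hbound
    linarith

theorem stmt7 (A : Finset ℤ) (k h m r ε : ℕ)
    (hk5 : 5 ≤ k) (hA : A.card = k)
    (hh : h = m * r + ε) (hε : ε ≤ r - 1)
    (hr : 2 ≤ r) (hrh : r ≤ h) (h2 : h ≤ r * k - 2)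
    (heq : ((genSum r h A).ncard : ℤ) =
      (h : ℤ) * k - (m : ℤ) ^ 2 * r + 1 - 2 * m * ε - ε) :
    ∃ a d : ℤ, 0 < d ∧ A = (Finset.range k).image fun i : ℕ => a + d * (i : ℤ) :=
  stmt7_general A k h m r ε hA hh hε hr hrh h2 heq
end

section
/- Let A be a finite nonempty set of integers with |A| = k and let h, r ≥ 1 with r | h, m = h/r ≥ 1, and h ≤ r·k. Then |h^(r)A| ≥ h·k − r·m² + 1, with equality when A is an arithmetic progression. -/
/-!
Taking `r` sums of `m`-element subsets of `A` uses every element at most `r` times, so the `r`-fold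
sumset of the restricted sumset `m^∧A` lies in `h^(r)A`. In a linearly ordered group
`|m^∧A| ≥ m(k - m) + 1` (remove `min A` and induct on `m`) and, by Cauchy–Davenport,
`|r • B| ≥ r(|B| - 1) + 1`, which together give `|h^(r)A| ≥ rm(k - m) + 1 = hk - rm² + 1`.

For `A = a + d·{0, …, k-1}` an element of `h^(r)A` is `ha + d s` with `s = ∑ i cᵢ`, where
`cᵢ ≤ r` and `∑ cᵢ = h`. Both `s` and its reflection `(k - 1)h - s` are at least
`r(0 + 1 + ⋯ + (m - 1))`, which leaves exactly `h(k - m) + 1` possible values of `s`.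
-/

open Finset Pointwise

section RestrictedSum

variable {α : Type*}

def restrictedSum [DecidableEq α] [AddCommMonoid α] (m : ℕ) (A : Finset α) : Finset α :=
  (A.powersetCard m).image fun s ↦ ∑ x ∈ s, x

theorem mem_restrictedSum [DecidableEq α] [AddCommMonoid α] {m : ℕ} {A : Finset α} {x : α} :
    x ∈ restrictedSum m A ↔ ∃ s ⊆ A, #s = m ∧ ∑ y ∈ s, y = x := by
  simp [restrictedSum, mem_powersetCard, and_assoc]

variable [LinearOrder α] [AddCancelCommMonoid α] [IsOrderedCancelAddMonoid α]

theorem le_card_restrictedSum {m : ℕ} {A : Finset α} (hm : m ≤ #A) :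
    m * (#A - m) + 1 ≤ #(restrictedSum m A) := by
  induction m generalizing A with
  | zero => simp [restrictedSum]
  | succ m ih =>
    have hA : A.Nonempty := card_pos.1 (by omega)
    set a := A.min' hA
    set A' := A.erase a
    have hA' : #A' = #A - 1 := card_erase_of_mem (min'_mem A hA)
    -- `a + m^∧A'` lies strictly below the `#A' - m` sums obtained by adding an element to an
    -- `m`-subset `T` of `A'` of maximal sum
    obtain ⟨T, hT, hTmax⟩ := (A'.powersetCard m).exists_max_image (fun s ↦ ∑ x ∈ s, x)
      (powersetCard_nonempty.2 (by omega))
    rw [mem_powersetCard] at hT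
    set low := (restrictedSum m A').image (a + ·)
    set high := (A' \ T).image (· + ∑ x ∈ T, x)
    have hlow : low ⊆ restrictedSum (m + 1) A := by
      intro y hy
      simp only [low, mem_image, mem_restrictedSum] at hy ⊢
      obtain ⟨_, ⟨s, hs, rfl, rfl⟩, rfl⟩ := hy
      have ha : a ∉ s := fun h ↦ by simpa [A'] using hs h
      exact ⟨insert a s, insert_subset (min'_mem A hA) (hs.trans (erase_subset a A)),
        card_insert_of_notMem ha, sum_insert ha⟩
    have hhigh : high ⊆ restrictedSum (m + 1) A := by
      intro y hy
      simp only [high, mem_image, mem_restrictedSum, mem_sdiff] at hy ⊢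
      obtain ⟨x, ⟨hxA', hxT⟩, rfl⟩ := hy
      exact ⟨insert x T, insert_subset (mem_of_mem_erase hxA') (hT.1.trans (erase_subset a A)),
        by rw [card_insert_of_notMem hxT, hT.2], sum_insert hxT⟩
    have hdisj : Disjoint low high := by
      simp only [low, high, disjoint_left, mem_image, mem_restrictedSum, mem_sdiff, not_exists,
        not_and]
      rintro _ ⟨_, ⟨s, hs, hsm, rfl⟩, rfl⟩ x ⟨hxA', -⟩ hx
      have hax : a < x := lt_of_le_of_ne (min'_le A x (mem_of_mem_erase hxA'))
        (ne_of_mem_erase hxA').symm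
      have hsT : ∑ y ∈ s, y ≤ ∑ y ∈ T, y := hTmax s (mem_powersetCard.2 ⟨hs, hsm⟩)
      exact (add_lt_add_of_lt_of_le hax hsT).ne' hx
    calc (m + 1) * (#A - (m + 1)) + 1 = (m * (#A' - m) + 1) + (#A' - m) := by
          rw [show #A - (m + 1) = #A' - m by omega]; ring
      _ ≤ #low + #high := by
        gcongr
        · rw [card_image_of_injective _ (add_right_injective a)]
          exact ih (by omega)
        · rw [card_image_of_injective _ (add_left_injective _), card_sdiff_of_subset hT.1, hT.2]
      _ = #(low ∪ high) := (card_union_of_disjoint hdisj).symm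
      _ ≤ #(restrictedSum (m + 1) A) := card_le_card (union_subset hlow hhigh)

theorem le_card_nsmul {B : Finset α} (hB : B.Nonempty) (r : ℕ) :
    r * (#B - 1) + 1 ≤ #(r • B) := by
  induction r with
  | zero => simp
  | succ r ih =>
    have hCD : #(r • B) + #B - 1 ≤ #(r • B + B) :=
      cauchy_davenport_add_of_linearOrder_isCancelAdd hB.nsmul hB
    rw [succ_nsmul, Nat.succ_mul]
    have := hB.card_pos
    omega

end RestrictedSum

section GenSum

variable {G : Type*} [AddCommGroup G]

theorem finite_genSum (r h : ℕ) (A : Finset G) : (genSum r h A).Finite := by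
  refine (Set.finite_range fun c : A → Fin (r + 1) ↦ ∑ a ∈ A.attach, (c a : ℕ) • (a : G)).subset ?_
  rintro x ⟨c, hcr, -, -, rfl⟩
  exact ⟨fun a ↦ ⟨c a, Nat.lt_succ_of_le (hcr a)⟩, sum_attach A fun a ↦ c a • a⟩

variable [DecidableEq G]

theorem add_sum_mem_genSum {r h : ℕ} {A S : Finset G} {x : G} (hx : x ∈ genSum r h A)
    (hS : S ⊆ A) : x + ∑ a ∈ S, a ∈ genSum (r + 1) (h + #S) A := by
  obtain ⟨c, hcr, hcA, hch, rfl⟩ := hx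
  refine ⟨fun a ↦ c a + if a ∈ S then 1 else 0, fun a ↦ ?_, fun a ha ↦ ?_, ?_, ?_⟩
  · have := hcr a
    dsimp only
    split_ifs <;> omega
  · by_cases haS : a ∈ S
    · exact hS haS
    · exact hcA a (by simpa [haS] using ha)
  · rw [sum_add_distrib, hch, sum_boole, Nat.cast_id, filter_mem_eq_inter, inter_eq_right.2 hS]
  · simp only [add_smul, sum_add_distrib, ite_smul, one_smul, zero_smul, sum_ite_mem,
      inter_eq_right.2 hS]

theorem nsmul_restrictedSum_subset_genSum (r m : ℕ) (A : Finset G) :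
    ((r • restrictedSum m A : Finset G) : Set G) ⊆ genSum r (r * m) A := by
  induction r with
  | zero =>
    intro x hx
    rw [zero_nsmul, coe_zero, Set.mem_zero] at hx
    exact ⟨0, by simp, by simp, by simp, by simp [hx]⟩
  | succ r ih =>
    intro x hx
    rw [succ_nsmul, coe_add, Set.mem_add] at hx
    obtain ⟨y, hy, z, hz, rfl⟩ := hx
    obtain ⟨S, hSA, hSm, rfl⟩ := mem_restrictedSum.1 hz
    simpa [hSm, Nat.succ_mul] using add_sum_mem_genSum (ih hy) hSA

end GenSum

theorem le_ncard_genSum {G : Type*} [AddCommGroup G] [LinearOrder G] [IsOrderedAddMonoid G]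
    (r m : ℕ) (A : Finset G) (hm : m ≤ #A) :
    m * r * (#A - m) + 1 ≤ (genSum r (m * r) A).ncard := by
  have hB := le_card_restrictedSum hm
  have hB₀ : (restrictedSum m A).Nonempty := card_pos.1 (by omega)
  calc m * r * (#A - m) + 1 = r * (m * (#A - m) + 1 - 1) + 1 := by rw [Nat.add_sub_cancel]; ring
    _ ≤ r * (#(restrictedSum m A) - 1) + 1 := by gcongr
    _ ≤ #(r • restrictedSum m A) := le_card_nsmul hB₀ r
    _ = ((r • restrictedSum m A : Finset G) : Set G).ncard := (Set.ncard_coe_finset _).symm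
    _ ≤ (genSum r (m * r) A).ncard := by
      rw [mul_comm m r]
      exact Set.ncard_le_ncard (nsmul_restrictedSum_subset_genSum r m A) (finite_genSum r _ A)

theorem mul_sum_range_le_sum_range_mul {r m k : ℕ} {b : ℕ → ℕ} (hmk : m ≤ k)
    (hb : ∀ i, b i ≤ r) (hsum : ∑ i ∈ range k, b i = m * r) :
    r * ∑ i ∈ range m, i ≤ ∑ i ∈ range k, i * b i := by
  zify
  -- every term `(i - m) * (b i - r * [i < m])` is nonnegative
  have hlow : ∑ i ∈ range m, ((i : ℤ) - m) * r ≤ ∑ i ∈ range m, ((i : ℤ) - m) * b i :=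
    sum_le_sum fun i hi ↦ mul_le_mul_of_nonpos_left (by exact_mod_cast hb i)
      (by rw [mem_range] at hi; omega)
  have hhigh : 0 ≤ ∑ i ∈ Ico m k, ((i : ℤ) - m) * b i :=
    sum_nonneg fun i hi ↦ mul_nonneg (by rw [mem_Ico] at hi; omega) (by positivity)
  have hsum' : ∑ i ∈ range m, (b i : ℤ) + ∑ i ∈ Ico m k, (b i : ℤ) = m * r := by
    rw [sum_range_add_sum_Ico _ hmk]; exact_mod_cast hsum
  rw [← sum_range_add_sum_Ico _ hmk]
  simp only [sub_mul, sum_sub_distrib, ← sum_mul, ← mul_sum, sum_const, card_range,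
    nsmul_eq_mul] at hlow hhigh
  linear_combination hlow + hhigh - (m : ℤ) * hsum'

theorem ncard_genSum_arithProg_le (r m k : ℕ) (a d : ℤ) (hd : d ≠ 0) (hmk : m ≤ k) :
    (genSum r (m * r) ((range k).image fun i : ℕ ↦ a + d * i)).ncard ≤ m * r * (k - m) + 1 := by
  set T := ∑ i ∈ range m, i
  have hT : T * 2 + m = m * m := by
    rw [sum_range_id_mul_two]
    obtain _ | m := m
    · rfl
    · simp; ring
  have hinj : Set.InjOn (fun i : ℕ ↦ a + d * i) (range k) := fun i _ j _ hij ↦ by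
    simpa [hd] using hij
  have hsub : genSum r (m * r) ((range k).image fun i : ℕ ↦ a + d * i) ⊆
      ((Icc (r * T : ℤ) (k * (m * r) - m * r - r * T)).image
        fun s ↦ (m * r : ℤ) * a + d * s : Finset ℤ) := by
    rintro x ⟨c, hcr, -, hch, rfl⟩
    rw [sum_image hinj] at hch ⊢
    have hlo : r * T ≤ ∑ i ∈ range k, i * c (a + d * i) :=
      mul_sum_range_le_sum_range_mul hmk (fun i ↦ hcr _) hch
    have hhi : r * T ≤ ∑ i ∈ range k, i * c (a + d * (k - 1 - i : ℕ)) :=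
      mul_sum_range_le_sum_range_mul hmk (fun i ↦ hcr _)
        (by rwa [sum_range_reflect (fun i ↦ c (a + d * i))])
    have htot : ∑ i ∈ range k, i * c (a + d * i) + ∑ i ∈ range k, i * c (a + d * (k - 1 - i : ℕ))
        + m * r = k * (m * r) := by
      rw [← hch, mul_sum, ← sum_range_reflect (fun i ↦ i * c (a + d * (k - 1 - i : ℕ))),
        ← sum_add_distrib, ← sum_add_distrib]
      refine sum_congr rfl fun i hi ↦ ?_
      rw [mem_range] at hi
      rw [Nat.sub_sub_self (by omega), ← add_mul, ← add_one_mul]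
      congr 1
      omega
    refine mem_image.2 ⟨∑ i ∈ range k, i * c (a + d * i), mem_Icc.2 ⟨by exact_mod_cast hlo, ?_⟩, ?_⟩
    · have := congrArg (Nat.cast : ℕ → ℤ) htot
      push_cast at this
      linarith
    · have hch' : ∑ i ∈ range k, (c (a + d * i) : ℤ) = m * r := by exact_mod_cast hch
      simp only [nsmul_eq_mul, mul_add, sum_add_distrib, ← sum_mul, hch', mul_sum]
      ring_nf
  have hT' : (T : ℤ) * 2 + m = m * m := by exact_mod_cast hT
  calc (genSum r (m * r) ((range k).image fun i : ℕ ↦ a + d * i)).ncard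
      ≤ #((Icc (r * T : ℤ) (k * (m * r) - m * r - r * T)).image
          fun s ↦ (m * r : ℤ) * a + d * s) := by
        rw [← Set.ncard_coe_finset]; exact Set.ncard_le_ncard hsub (finite_toSet _)
    _ ≤ #(Icc (r * T : ℤ) (k * (m * r) - m * r - r * T)) := card_image_le
    _ = m * r * (k - m) + 1 := by
      rw [Int.card_Icc, ← Int.toNat_natCast (m * r * (k - m) + 1)]
      congr 1
      push_cast [Nat.cast_sub hmk]
      linear_combination (-(r : ℤ)) * hT'

theorem stmt9_general (A : Finset ℤ) (k h m r : ℕ)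
    (hk : A.card = k)
    (hr : 1 ≤ r) (hh : h = m * r) (h2 : h ≤ r * k) :
    ((genSum r h A).ncard : ℤ) ≥ (h : ℤ) * k - (r : ℤ) * (m : ℤ) ^ 2 + 1 ∧
    (∀ a d : ℤ, 0 < d → A = (Finset.range k).image (fun i : ℕ => a + d * (i : ℤ)) →
      ((genSum r h A).ncard : ℤ) = (h : ℤ) * k - (r : ℤ) * (m : ℤ) ^ 2 + 1) := by
  subst hk hh
  have hmk : m ≤ #A := Nat.le_of_mul_le_mul_right (by rwa [mul_comm r] at h2) hr
  have hval : ((m * r * (#A - m) + 1 : ℕ) : ℤ) = ((m * r : ℕ) : ℤ) * #A - r * m ^ 2 + 1 := by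
    push_cast [Nat.cast_sub hmk]; ring
  have hlow := le_ncard_genSum r m A hmk
  refine ⟨by rw [ge_iff_le, ← hval]; exact_mod_cast hlow, fun a d hd hA ↦ ?_⟩
  have hup := ncard_genSum_arithProg_le r m #A a d hd.ne' hmk
  rw [← hA] at hup
  rw [← hval]
  exact_mod_cast le_antisymm hup hlow

theorem stmt9 (A : Finset ℤ) (k h m r : ℕ)
    (hA : A.Nonempty) (hk : A.card = k)
    (hm : 1 ≤ m) (hr : 1 ≤ r) (hh : h = m * r) (h2 : h ≤ r * k) :
    ((genSum r h A).ncard : ℤ) ≥ (h : ℤ) * k - (r : ℤ) * (m : ℤ) ^ 2 + 1 ∧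
    (∀ a d : ℤ, 0 < d → A = (Finset.range k).image (fun i : ℕ => a + d * (i : ℤ)) →
      ((genSum r h A).ncard : ℤ) = (h : ℤ) * k - (r : ℤ) * (m : ℤ) ^ 2 + 1) :=
  stmt9_general A k h m r hk hr hh h2
end

section
/- Let h = m·r with r ≥ 2, m ≥ 2, and let A be a set of k ≥ 5 integers with m ≤ k − 1 and h ≤ r·k − 2. If |h^(r)A| = h·(k − m) + 1, then the restricted sumset m^∧A is an arithmetic progression. -/
open Finset Pointwise

/-! Write `B = m^∧A`. Splitting off an `m`-set that contains every element used the maximal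
number `r` of times shows, by induction on `r`, that `h^(r)A = rB`. Since `|B| ≥ m(k - m) + 1`
and, by iterated Cauchy–Davenport, `|rB| ≥ r|B| - r + 1`, the hypothesis forces
`|rB| = r|B| - r + 1`; splitting `rB = (r - 2)B + 2B` this gives `|2B| = 2|B| - 1`, and
Freiman's `2k - 1` theorem makes `B` an arithmetic progression. -/

variable {G : Type*}

/-- The restricted sumset `m^∧A`. -/
def restrictedSumset [AddCommMonoid G] [DecidableEq G] (m : ℕ) (A : Finset G) : Finset G :=
  (A.powersetCard m).image fun S => ∑ a ∈ S, a

lemma restrictedSumset_nonempty [AddCommMonoid G] [DecidableEq G] {m : ℕ} {A : Finset G}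
    (hm : m ≤ #A) : (restrictedSumset m A).Nonempty :=
  (powersetCard_nonempty.2 hm).image _

section Counting

variable {α : Type*} [DecidableEq α] {S A : Finset α}

lemma sum_ite_mem_one_eq_card (hS : S ⊆ A) : ∑ a ∈ A, (if a ∈ S then 1 else 0) = #S := by
  rw [sum_boole, filter_mem_eq_inter, inter_eq_right.2 hS, Nat.cast_id]

lemma sum_ite_mem_one_nsmul [AddCommMonoid α] (hS : S ⊆ A) :
    ∑ a ∈ A, (if a ∈ S then 1 else 0) • a = ∑ a ∈ S, a := by
  simp only [ite_smul, one_smul, zero_smul]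
  rw [sum_ite_mem, inter_eq_right.2 hS]

lemma exists_subset_card_eq_of_sum_eq_mul_succ {c : α → ℕ} {m r : ℕ}
    (hc : ∀ a ∈ A, c a ≤ r + 1) (hsum : ∑ a ∈ A, c a = m * (r + 1)) :
    ∃ T ⊆ A, #T = m ∧ (∀ a ∈ T, c a ≠ 0) ∧ ∀ a ∈ A \ T, c a ≤ r := by
  set U := A.filter (c · ≠ 0)
  set M := A.filter (c · = r + 1)
  have hMU : M ⊆ U := monotone_filter_right A fun a _ (h : c a = r + 1) => by omega
  have hM : #M ≤ m := by
    refine Nat.le_of_mul_le_mul_right ?_ r.succ_pos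
    calc #M * (r + 1) = ∑ a ∈ M, c a := by
          rw [sum_congr rfl fun a ha => (mem_filter.1 ha).2, sum_const, smul_eq_mul]
      _ ≤ ∑ a ∈ A, c a := sum_le_sum_of_subset (filter_subset _ _)
      _ = m * (r + 1) := hsum
  have hU : m ≤ #U := by
    refine Nat.le_of_mul_le_mul_right ?_ r.succ_pos
    calc m * (r + 1) = ∑ a ∈ U, c a := by rw [sum_filter_ne_zero, hsum]
      _ ≤ ∑ _a ∈ U, (r + 1) := sum_le_sum fun a ha => hc a (mem_filter.1 ha).1
      _ = #U * (r + 1) := by rw [sum_const, smul_eq_mul]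
  obtain ⟨T, hMT, hTU, hT⟩ := exists_subsuperset_card_eq hMU hM hU
  refine ⟨T, hTU.trans (filter_subset _ _), hT, fun a ha => (mem_filter.1 (hTU ha)).2,
    fun a ha => ?_⟩
  obtain ⟨haA, haT⟩ := mem_sdiff.1 ha
  have hne : c a ≠ r + 1 := fun h => haT (hMT (mem_filter.2 ⟨haA, h⟩))
  have := hc a haA
  omega

end Counting

section GenSum

variable [AddCommGroup G]

lemma genSum_zero_zero (A : Finset G) : genSum 0 0 A = {0} := by
  ext x
  constructor
  · rintro ⟨c, hc, -, -, rfl⟩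
    simp [fun a => Nat.le_zero.1 (hc a)]
  · rintro rfl
    exact ⟨0, fun _ => le_rfl, fun _ h => (h rfl).elim, by simp, by simp⟩

lemma genSum_add_subset_s10 (r₁ r₂ h₁ h₂ : ℕ) (A : Finset G) :
    genSum r₁ h₁ A + genSum r₂ h₂ A ⊆ genSum (r₁ + r₂) (h₁ + h₂) A := by
  rintro _ ⟨_, ⟨c₁, hc₁, hA₁, hs₁, rfl⟩, _, ⟨c₂, hc₂, hA₂, hs₂, rfl⟩, rfl⟩
  refine ⟨c₁ + c₂, fun a => add_le_add (hc₁ a) (hc₂ a), fun a ha => ?_,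
    by simp [sum_add_distrib, hs₁, hs₂], by simp [add_smul, sum_add_distrib]⟩
  by_cases h : c₁ a = 0
  · exact hA₂ a (by simpa [h] using ha)
  · exact hA₁ a h

variable [DecidableEq G]

lemma sum_mem_genSum_one {S A : Finset G} (hS : S ⊆ A) : ∑ a ∈ S, a ∈ genSum 1 #S A :=
  ⟨fun a => if a ∈ S then 1 else 0, fun a => by by_cases h : a ∈ S <;> simp [h],
    fun a ha => hS (by simpa using ha), sum_ite_mem_one_eq_card hS, sum_ite_mem_one_nsmul hS⟩

lemma genSum_one (m : ℕ) (A : Finset G) : genSum 1 m A = restrictedSumset m A := by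
  ext x
  simp only [restrictedSumset, coe_image, Set.mem_image, mem_coe, mem_powersetCard]
  constructor
  · rintro ⟨c, hc, -, hsum, rfl⟩
    have hS : A.filter (c · = 1) ⊆ A := filter_subset _ _
    have hcS : ∀ a ∈ A, c a = if a ∈ A.filter (c · = 1) then 1 else 0 := fun a ha => by
      by_cases h : c a = 1
      · simp [ha, h]
      · simp only [mem_filter, ha, h, and_false, if_false]
        have := hc a
        omega
    refine ⟨_, ⟨hS, ?_⟩, ?_⟩
    · rw [← sum_ite_mem_one_eq_card hS, ← hsum, sum_congr rfl hcS]
    · rw [← sum_ite_mem_one_nsmul hS]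
      exact sum_congr rfl fun a ha => by rw [hcS a ha]
  · rintro ⟨S, ⟨hSA, rfl⟩, rfl⟩
    exact sum_mem_genSum_one hSA

lemma genSum_succ_subset (m r : ℕ) (A : Finset G) :
    genSum (r + 1) (m * (r + 1)) A ⊆ genSum r (m * r) A + genSum 1 m A := by
  rintro _ ⟨c, hc, hcA, hsum, rfl⟩
  obtain ⟨T, hTA, rfl, hTc, hc'⟩ :=
    exists_subset_card_eq_of_sum_eq_mul_succ (fun a _ => hc a) hsum
  set e : G → ℕ := fun a => if a ∈ T then 1 else 0
  have he : ∀ a, e a ≤ c a := fun a => by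
    by_cases ha : a ∈ T
    · simpa [e, ha, Nat.one_le_iff_ne_zero] using hTc a ha
    · simp [e, ha]
  refine ⟨_, ⟨fun a => c a - e a, fun a => ?_, fun a ha => hcA a fun h => ha (by simp [h]), ?_,
    rfl⟩, _, sum_mem_genSum_one hTA, ?_⟩
  · by_cases haT : a ∈ T
    · have := hc a
      simp only [e, haT, if_true]
      omega
    · by_cases haA : a ∈ A
      · simpa [e, haT] using hc' a (mem_sdiff.2 ⟨haA, haT⟩)
      · simp [show c a = 0 by by_contra h; exact haA (hcA a h)]
  · rw [sum_tsub_distrib A fun a _ => he a, hsum, sum_ite_mem_one_eq_card hTA, mul_add_one,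
      Nat.add_sub_cancel]
  · show ∑ a ∈ A, (c a - e a) • a + ∑ a ∈ T, a = _
    rw [← sum_ite_mem_one_nsmul hTA, ← sum_add_distrib]
    exact sum_congr rfl fun a _ => by rw [← add_smul, Nat.sub_add_cancel (he a)]

theorem genSum_mul_eq_nsmul_restrictedSumset (m r : ℕ) (A : Finset G) :
    genSum r (m * r) A = ↑(r • restrictedSumset m A) := by
  induction r with
  | zero => simp [genSum_zero_zero, Set.singleton_zero]
  | succ r ih =>
    rw [succ_nsmul, coe_add, ← ih, ← genSum_one]
    refine (genSum_succ_subset m r A).antisymm ?_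
    simpa [mul_add_one] using genSum_add_subset_s10 r 1 (m * r) m A

end GenSum

section LinearOrder

variable [AddCancelCommMonoid G] [LinearOrder G] [IsOrderedCancelAddMonoid G]

lemma card_nsmul_add_ge {B : Finset G} (hB : B.Nonempty) (r : ℕ) :
    r * #B + 1 ≤ #(r • B) + r := by
  induction r with
  | zero => simp
  | succ r ih =>
    have hcd := cauchy_davenport_add_of_linearOrder_isCancelAdd (hB.nsmul (n := r)) hB
    rw [← succ_nsmul] at hcd
    have := (hB.nsmul (n := r)).card_pos
    rw [add_one_mul]
    omega

/-- Adding a new maximum `a` to `s` creates `m` sums above the largest one, `∑ S` say: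
the sums `a + ∑ (S \ {t})` for `t ∈ S`. -/
lemma card_restrictedSumset_insert_ge {a : G} {s : Finset G} (ha : ∀ x ∈ s, x < a) {m : ℕ}
    (hm : m ≤ #s) :
    #(restrictedSumset m s) + m ≤ #(restrictedSumset m (insert a s)) := by
  obtain ⟨S, hS, hSmax⟩ := mem_image.1 (max'_mem _ (restrictedSumset_nonempty hm))
  obtain ⟨hSs, rfl⟩ := mem_powersetCard.1 hS
  set new := S.image fun t => a + ∑ x ∈ S.erase t, x
  have hnew : #new = #S := card_image_of_injOn fun t ht t' ht' htt' => by
    have h := add_left_cancel htt'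
    have h' := (add_sum_erase S id ht).trans (add_sum_erase S id ht').symm
    simp only [id] at h'
    rw [h] at h'
    exact add_right_cancel h'
  have hlt : ∀ y ∈ restrictedSumset #S s, ∀ z ∈ new, y < z := by
    rintro y hy _ hz
    obtain ⟨t, ht, rfl⟩ := mem_image.1 hz
    calc y ≤ ∑ x ∈ S, x := hSmax ▸ le_max' _ _ hy
      _ = t + ∑ x ∈ S.erase t, x := (add_sum_erase S id ht).symm
      _ < a + ∑ x ∈ S.erase t, x := add_lt_add_left (ha t (hSs ht)) _
  have hsub : restrictedSumset #S s ∪ new ⊆ restrictedSumset #S (insert a s) := by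
    refine union_subset (image_subset_image (powersetCard_mono (subset_insert a s))) ?_
    rintro _ hz
    obtain ⟨t, ht, rfl⟩ := mem_image.1 hz
    have haS : a ∉ S.erase t := fun h => (ha a (hSs (mem_of_mem_erase h))).false
    refine mem_image.2 ⟨insert a (S.erase t), mem_powersetCard.2 ⟨?_, ?_⟩, sum_insert haS⟩
    · exact insert_subset_insert a ((erase_subset t S).trans hSs)
    · rw [card_insert_of_notMem haS, card_erase_of_mem ht,
        Nat.sub_add_cancel (card_pos.2 ⟨t, ht⟩)]
  calc #(restrictedSumset #S s) + #S
      = #(restrictedSumset #S s ∪ new) := by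
        rw [card_union_of_disjoint (disjoint_left.2 fun y hy hy' => (hlt y hy y hy').false),
          hnew]
    _ ≤ _ := card_le_card hsub

theorem card_restrictedSumset_ge (A : Finset G) {m : ℕ} (hm : m ≤ #A) :
    m * (#A - m) + 1 ≤ #(restrictedSumset m A) := by
  induction A using Finset.induction_on_max generalizing m with
  | empty => simpa [Nat.le_zero.1 hm] using card_pos.2 (restrictedSumset_nonempty hm)
  | insert a s ha ih =>
    have hcard := card_insert_of_notMem fun h => (ha a h).false
    rw [hcard] at hm ⊢
    rcases hm.lt_or_eq with hm | rfl
    · have hm := Nat.lt_succ_iff.1 hm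
      have h1 := ih hm
      have h2 := card_restrictedSumset_insert_ge ha hm
      have h3 : m * (#s + 1 - m) = m * (#s - m) + m := by
        rw [Nat.sub_add_comm hm, mul_add_one]
      omega
    · simpa using card_pos.2 (restrictedSumset_nonempty hcard.ge)

end LinearOrder

lemma Finset.exists_strictMono_image_range_eq (B : Finset ℤ) :
    ∃ b : ℕ → ℤ, StrictMono b ∧ (range #B).image b = B := by
  set e := B.orderEmbOfFin rfl
  set M := ∑ x ∈ B, |x|
  have he : ∀ i, e i ≤ M := fun i =>
    (le_abs_self _).trans (single_le_sum (fun x _ => abs_nonneg x) (B.orderEmbOfFin_mem rfl i))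
  set b : ℕ → ℤ := fun i => if h : i < #B then e ⟨i, h⟩ else M + i
  have hb : StrictMono b := strictMono_nat_of_lt_succ fun i => by
    by_cases h : i + 1 < #B
    · simp only [b, dif_pos h, dif_pos (i.lt_succ_self.trans h)]
      exact e.strictMono (Fin.mk_lt_mk.2 i.lt_succ_self)
    · by_cases h' : i < #B
      · simp only [b, dif_pos h', dif_neg h]
        push_cast
        linarith [he ⟨i, h'⟩, (i.cast_nonneg : (0 : ℤ) ≤ i)]
      · simp only [b, dif_neg h', dif_neg h]
        push_cast
        linarith [(i.cast_nonneg : (0 : ℤ) ≤ i)]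
  refine ⟨b, hb, eq_of_subset_of_card_le (fun x hx => ?_) ?_⟩
  · obtain ⟨i, hi, rfl⟩ := mem_image.1 hx
    simp only [b, dif_pos (mem_range.1 hi)]
    exact B.orderEmbOfFin_mem rfl _
  · rw [card_image_of_injective _ hb.injective, card_range]

/-- The chain `b 0 + b 0 < b 0 + b 1 < b 1 + b 1 < b 1 + b 2 < ⋯` has `2n - 1` terms, so it
exhausts `B + B`; `b i + b (i + 2)` lies strictly between its terms `b i + b (i + 1)` and
`b (i + 1) + b (i + 2)`, hence equals the one in between, `2 b (i + 1)`. -/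
lemma add_eq_two_mul_of_card_add_le {b : ℕ → ℤ} (hb : StrictMono b) {n : ℕ}
    (hcard : #((range n).image b + (range n).image b) ≤ 2 * n - 1) {i : ℕ} (hi : i + 2 < n) :
    b i + b (i + 2) = 2 * b (i + 1) := by
  set B := (range n).image b
  have hB : ∀ j, j < n → b j ∈ B := fun j hj => mem_image_of_mem b (mem_range.2 hj)
  set u : ℕ → ℤ := fun j => b (j / 2) + b ((j + 1) / 2)
  have hu : StrictMono u := strictMono_nat_of_lt_succ fun j => by
    rcases Nat.even_or_odd' j with ⟨l, rfl | rfl⟩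
    · show b (2 * l / 2) + b ((2 * l + 1) / 2) < b ((2 * l + 1) / 2) + b ((2 * l + 1 + 1) / 2)
      rw [show 2 * l / 2 = l by omega, show (2 * l + 1) / 2 = l by omega,
        show (2 * l + 1 + 1) / 2 = l + 1 by omega]
      exact add_lt_add_right (hb l.lt_succ_self) _
    · show b ((2 * l + 1) / 2) + b ((2 * l + 1 + 1) / 2) < b ((2 * l + 1 + 1) / 2) + _
      rw [show (2 * l + 1) / 2 = l by omega, show (2 * l + 1 + 1) / 2 = l + 1 by omega,
        show (2 * l + 1 + 1 + 1) / 2 = l + 1 by omega]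
      exact add_lt_add_left (hb l.lt_succ_self) _
  have hchain : (range (2 * n - 1)).image u = B + B := by
    refine eq_of_subset_of_card_le (fun x hx => ?_) ?_
    · obtain ⟨j, hj, rfl⟩ := mem_image.1 hx
      have := mem_range.1 hj
      exact add_mem_add (hB _ (by omega)) (hB _ (by omega))
    · rwa [card_image_of_injective _ hu.injective, card_range]
  obtain ⟨j, -, hj⟩ := mem_image.1 (hchain ▸ add_mem_add (hB i (by omega)) (hB (i + 2) hi))
  have hlo : u (2 * i + 1) < u j := by
    rw [hj, show u (2 * i + 1) = b i + b (i + 1) by simp only [u]; congr 2 <;> omega]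
    exact add_lt_add_right (hb (show i + 1 < i + 2 by omega)) _
  have hhi : u j < u (2 * i + 3) := by
    rw [hj, show u (2 * i + 3) = b (i + 1) + b (i + 2) by simp only [u]; congr 2 <;> omega]
    exact add_lt_add_left (hb (show i < i + 1 by omega)) _
  have hj' : j = 2 * i + 2 := by
    have := hu.lt_iff_lt.1 hlo
    have := hu.lt_iff_lt.1 hhi
    omega
  rw [← hj, hj']
  show b ((2 * i + 2) / 2) + b ((2 * i + 2 + 1) / 2) = _
  rw [show (2 * i + 2) / 2 = i + 1 by omega, show (2 * i + 2 + 1) / 2 = i + 1 by omega, two_mul]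

lemma eq_add_mul_of_add_eq_two_mul {b : ℕ → ℤ} {n : ℕ}
    (hmid : ∀ i, i + 2 < n → b i + b (i + 2) = 2 * b (i + 1)) :
    ∀ i, i < n → b i = b 0 + (b 1 - b 0) * i := by
  intro i
  induction i using Nat.twoStepInduction with
  | zero => simp
  | one => simp
  | more i ih ih' =>
    intro hi
    have := hmid i hi
    rw [ih (by omega), ih' (by omega)] at this
    push_cast at this ⊢
    linarith

/-- Freiman's `2k - 1` theorem. -/
theorem isAPSet_of_card_add_le {B : Finset ℤ} (hB : #(B + B) ≤ 2 * #B - 1) : IsAPSet B := by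
  obtain ⟨b, hb, hbB⟩ := B.exists_strictMono_image_range_eq
  have hmid : ∀ i, i + 2 < #B → b i + b (i + 2) = 2 * b (i + 1) := fun i hi =>
    add_eq_two_mul_of_card_add_le hb (by rwa [hbB]) hi
  refine ⟨b 0, b 1 - b 0, #B, sub_pos.2 (hb zero_lt_one), ?_⟩
  calc (B : Set ℤ) = ↑((range #B).image b) := by rw [hbB]
    _ = _ := by
      rw [image_congr fun i hi => eq_add_mul_of_add_eq_two_mul hmid i (mem_range.1 hi)]

theorem isAPSet_of_card_nsmul_le {B : Finset ℤ} {r : ℕ} (hr : 2 ≤ r)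
    (hB : #(r • B) + r ≤ r * #B + 1) : IsAPSet B := by
  have hne : B.Nonempty := by
    rw [nonempty_iff_ne_empty]
    rintro rfl
    simp only [card_empty, mul_zero, zero_add] at hB
    omega
  apply isAPSet_of_card_add_le
  obtain ⟨s, rfl⟩ := Nat.exists_eq_add_of_le' hr
  have hsplit : (s + 2) • B = s • B + (B + B) := by rw [add_nsmul, two_nsmul]
  have hcd := cauchy_davenport_add_of_linearOrder_isCancelAdd (hne.nsmul (n := s)) (hne.add hne)
  rw [← hsplit] at hcd
  have hs := card_nsmul_add_ge hne s
  have := (hne.nsmul (n := s)).card_pos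
  rw [add_mul] at hB
  omega

theorem stmt10_general (A : Finset ℤ) (k h m r : ℕ)
    (hA : A.card = k)
    (hr : 2 ≤ r) (hh : h = m * r)
    (hmk : m ≤ k - 1)
    (heq : (genSum r h A).ncard = h * (k - m) + 1) :
    IsAPSet (genSum 1 m A) := by
  subst hh hA
  rw [genSum_mul_eq_nsmul_restrictedSumset, Set.ncard_coe_finset] at heq
  rw [genSum_one]
  refine isAPSet_of_card_nsmul_le hr ?_
  have hlow := card_restrictedSumset_ge A (m := m) (by omega)
  rw [heq]
  nlinarith

theorem stmt10 (A : Finset ℤ) (k h m r : ℕ)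
    (hk5 : 5 ≤ k) (hA : A.card = k)
    (hr : 2 ≤ r) (hm : 2 ≤ m) (hh : h = m * r)
    (hmk : m ≤ k - 1) (h2 : h ≤ r * k - 2)
    (heq : (genSum r h A).ncard = h * (k - m) + 1) :
    IsAPSet (genSum 1 m A) :=
  stmt10_general A k h m r hA hr hh hmk heq
end

section
/- Let p be a prime, let A ⊆ Z/pZ be finite, and let h = m·r + ε with 1 ≤ ε ≤ r − 1 and m + 1 ≤ |A|. Then (m+1)^∧A + (h−m−1)^(r−1)A ⊆ h^(r)A. -/
open Finset Pointwise

theorem stmt12 (p : ℕ) (hp : p.Prime) (A : Finset (ZMod p)) (h m r ε : ℕ)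
    (hh : h = m * r + ε) (hε1 : 1 ≤ ε) (hε2 : ε ≤ r - 1)
    (hmk : m + 1 ≤ A.card) :
    genSum 1 (m + 1) A + genSum (r - 1) (h - m - 1) A ⊆ genSum r h A := by
  have hr : 2 ≤ r := by omega
  have hhm : m + 1 ≤ h := by nlinarith [hh, hε1, hr]
  rintro z ⟨x, ⟨c₁, hc₁r, hc₁A, hc₁s, hc₁x⟩, y, ⟨c₂, hc₂r, hc₂A, hc₂s, hc₂y⟩, rfl⟩
  refine ⟨fun a => c₁ a + c₂ a, fun a => ?_, fun a ha => ?_, ?_, ?_⟩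
  · show c₁ a + c₂ a ≤ r
    have := hc₁r a; have := hc₂r a; omega
  · replace ha : c₁ a + c₂ a ≠ 0 := ha
    rcases Nat.eq_zero_or_pos (c₁ a) with h1 | h1
    · exact hc₂A a (by omega)
    · exact hc₁A a (by omega)
  · show (∑ a ∈ A, (c₁ a + c₂ a)) = h
    rw [Finset.sum_add_distrib, hc₁s, hc₂s]; omega
  · show (∑ a ∈ A, (c₁ a + c₂ a) • a) = x + y
    simp only [add_smul, Finset.sum_add_distrib, hc₁x, hc₂y]
end

section
/- Let A = {a_1 < ... < a_k} be a finite set of integers, h = m·r + ε with 1 ≤ ε ≤ r − 1 and m + ε ≤ k. Then the minimum of h^(r)A equals r·(a_1 + ... + a_m) + ε·a_{m+1}, and the minimum of the subset B = (r−1)·(m^∧A) + (m+ε)^∧A equals r·(a_1 + ... + a_m) + a_{m+1} + ... + a_{m+ε}. -/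
open Finset Pointwise

/-!
Writing an element of `h^(r)A` through its multiplicities `c i ≤ r` at `a i`, the difference
between `∑ c i a i` and `r (a₀ + ⋯ + a_{m-1}) + ε a_m` equals
`∑_{i<m} (c i - r)(a i - a m) + ∑_{i≥m} c i (a i - a m)`, because `∑ c i = m r + ε`.
Every term is nonnegative since `a` is increasing, so the greedy choice is minimal.
For `B`, each of its `r` summands is a restricted sumset (`r = 1`), whose least element is the
sum of the smallest elements of `A`, and least elements of sumsets add up.
-/

theorem mem_genSum_image_iff {ι G : Type*} [AddCommGroup G] [DecidableEq G]
    {s : Finset ι} {a : ι → G} (ha : Set.InjOn a s) {r h : ℕ} {x : G} :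
    x ∈ genSum r h (s.image a) ↔
      ∃ c : ι → ℕ, (∀ i ∈ s, c i ≤ r) ∧ ∑ i ∈ s, c i = h ∧ ∑ i ∈ s, c i • a i = x := by
  constructor
  · rintro ⟨c, hcr, -, hsum, hx⟩
    exact ⟨fun i => c (a i), fun i _ => hcr (a i), (sum_image ha).symm.trans hsum,
      (sum_image ha).symm.trans hx⟩
  · rintro ⟨c, hcr, hsum, hx⟩
    have hmaps : ∀ i ∈ s, a i ∈ s.image a := fun i hi => mem_image_of_mem a hi
    refine ⟨fun y => ∑ i ∈ s with a i = y, c i, fun y => ?_, fun y hy => ?_, ?_, ?_⟩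
    · rcases (s.filter (a · = y)).eq_empty_or_nonempty with hempty | ⟨j, hj⟩
      · simp [hempty]
      · have hfiber : ∀ i ∈ s.filter (a · = y), i ≠ j → c i = 0 := fun i hi hij =>
          absurd (ha (mem_filter.1 hi).1 (mem_filter.1 hj).1
            ((mem_filter.1 hi).2.trans (mem_filter.1 hj).2.symm)) hij
        simpa only [sum_eq_single_of_mem j hj hfiber] using hcr j (mem_filter.1 hj).1
    · obtain ⟨i, hi, -⟩ := exists_ne_zero_of_sum_ne_zero hy
      obtain ⟨his, rfl⟩ := mem_filter.1 hi
      exact hmaps i his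
    · rw [sum_fiberwise_of_maps_to hmaps, hsum]
    · calc ∑ y ∈ s.image a, (∑ i ∈ s with a i = y, c i) • y
          = ∑ y ∈ s.image a, ∑ i ∈ s with a i = y, c i • a i :=
            sum_congr rfl fun y _ => by
              rw [sum_smul]
              exact sum_congr rfl fun i hi => by rw [(mem_filter.1 hi).2]
        _ = x := (sum_fiberwise_of_maps_to hmaps _).trans hx

theorem sum_range_ite_lt_ite_eq {M : Type*} [AddCommMonoid M] {m k : ℕ} (hm : m < k)
    (u v : ℕ → M) :
    ∑ i ∈ range k, (if i < m then u i else if i = m then v i else 0) =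
      ∑ i ∈ range m, u i + v m := by
  rw [← sum_subset (range_subset_range.2 hm) fun i hik him => ?_, sum_range_succ,
    if_neg (lt_irrefl m), if_pos rfl]
  · exact congrArg (· + v m) (sum_congr rfl fun i hi => if_pos (mem_range.1 hi))
  · rw [mem_range] at hik him
    rw [if_neg (by omega), if_neg (by omega)]

section OrderedRing

variable {R : Type*} [CommRing R] [LinearOrder R] [IsStrictOrderedRing R]

theorem mul_sum_range_add_le_sum_nsmul {a : ℕ → R} {k m r ε : ℕ}
    (ha : MonotoneOn a (range k)) (hm : m < k) (c : ℕ → ℕ) (hcr : ∀ i ∈ range k, c i ≤ r)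
    (hc : ∑ i ∈ range k, c i = m * r + ε) :
    (r : R) * ∑ i ∈ range m, a i + ε * a m ≤ ∑ i ∈ range k, c i • a i := by
  have hcR : ∑ i ∈ range k, (c i : R) = m * r + ε := by exact_mod_cast hc
  have hdecomp : ∑ i ∈ range k, c i • a i - ((r : R) * ∑ i ∈ range m, a i + ε * a m) =
      ∑ i ∈ range m, ((c i : R) - r) * (a i - a m) + ∑ i ∈ Ico m k, (c i : R) * (a i - a m) := by
    rw [← sum_range_add_sum_Ico _ hm.le] at hcR ⊢
    simp only [nsmul_eq_mul, sub_mul, mul_sub, sum_sub_distrib, ← sum_mul, ← mul_sum,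
      sum_const, card_range]
    linear_combination a m * hcR
  have hmk : m ∈ range k := mem_range.2 hm
  have hbelow : ∀ i ∈ range m, 0 ≤ ((c i : R) - r) * (a i - a m) := fun i hi => by
    have hik : i ∈ range k := mem_range.2 ((mem_range.1 hi).trans hm)
    exact mul_nonneg_of_nonpos_of_nonpos (sub_nonpos.2 (by exact_mod_cast hcr i hik))
      (sub_nonpos.2 (ha hik hmk (mem_range.1 hi).le))
  have habove : ∀ i ∈ Ico m k, 0 ≤ (c i : R) * (a i - a m) := fun i hi => by
    obtain ⟨hmi, hik⟩ := mem_Ico.1 hi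
    exact mul_nonneg (Nat.cast_nonneg _) (sub_nonneg.2 (ha hmk (mem_range.2 hik) hmi))
  linarith [sum_nonneg hbelow, sum_nonneg habove]

theorem isLeast_genSum_image_range [DecidableEq R] {a : ℕ → R} {k m r ε : ℕ}
    (ha : StrictMonoOn a (range k)) (hm : m < k) (hε : ε ≤ r) :
    IsLeast (genSum r (m * r + ε) ((range k).image a)) (r * ∑ i ∈ range m, a i + ε * a m) := by
  have hinj : Set.InjOn a (range k) := ha.injOn
  refine ⟨(mem_genSum_image_iff hinj).2
    ⟨fun i => if i < m then r else if i = m then ε else 0, fun i _ => ?_, ?_, ?_⟩, ?_⟩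
  · dsimp only
    split_ifs <;> omega
  · rw [sum_range_ite_lt_ite_eq hm, sum_const, card_range, smul_eq_mul]
  · simp only [ite_smul, zero_smul]
    rw [sum_range_ite_lt_ite_eq hm, ← smul_sum, nsmul_eq_mul, nsmul_eq_mul]
  · rintro x hx
    obtain ⟨c, hcr, hc, rfl⟩ := (mem_genSum_image_iff hinj).1 hx
    exact mul_sum_range_add_le_sum_nsmul ha.monotoneOn hm c hcr hc

end OrderedRing

theorem IsLeast.add {G : Type*} [Add G] [Preorder G] [AddLeftMono G] [AddRightMono G]
    {s t : Set G} {a b : G} (ha : IsLeast s a) (hb : IsLeast t b) : IsLeast (s + t) (a + b) :=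
  ⟨Set.add_mem_add ha.1 hb.1, add_mem_lowerBounds_add ha.2 hb.2⟩

theorem IsLeast.iterSum {G : Type*} [AddCommGroup G] [PartialOrder G] [IsOrderedAddMonoid G]
    {t : Set G} {b : G} (hb : IsLeast t b) (n : ℕ) : IsLeast (iterSum n t) (n • b) :=
  ⟨⟨fun _ => b, fun _ => hb.1, by simp⟩, by
    rintro _ ⟨f, hf, rfl⟩
    simpa using sum_le_sum (s := univ) fun i _ => hb.2 (hf i)⟩

theorem stmt14 (a : ℕ → ℤ) (k h m r ε : ℕ)
    (ha : StrictMonoOn a (Finset.range k : Set ℕ))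
    (A : Finset ℤ) (hA : A = (Finset.range k).image a)
    (hh : h = m * r + ε) (hε1 : 1 ≤ ε) (hε2 : ε ≤ r - 1) (hmk : m + ε ≤ k) :
    IsLeast (genSum r h A) ((r : ℤ) * (∑ i ∈ Finset.range m, a i) + (ε : ℤ) * a m) ∧
    IsLeast (iterSum (r - 1) (genSum 1 m A) + genSum 1 (m + ε) A)
      ((r : ℤ) * (∑ i ∈ Finset.range m, a i) + ∑ i ∈ Finset.Ico m (m + ε), a i) := by
  subst hA hh
  have hm : m < k := by omega
  refine ⟨isLeast_genSum_image_range ha hm (by omega), ?_⟩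
  have hleast_m : IsLeast (genSum 1 m ((range k).image a)) (∑ i ∈ range m, a i) := by
    simpa using isLeast_genSum_image_range ha hm (r := 1) (ε := 0) zero_le_one
  -- `m + ε` may equal `k`; write it as `n * 1 + 1` with `n < k`
  obtain ⟨n, hn⟩ : ∃ n, m + ε = n + 1 := ⟨m + ε - 1, by omega⟩
  have hleast_mε : IsLeast (genSum 1 (m + ε) ((range k).image a))
      (∑ i ∈ range (m + ε), a i) := by
    simpa [hn, sum_range_succ] using
      isLeast_genSum_image_range ha (m := n) (r := 1) (ε := 1) (by omega) le_rfl
  have hvalue : (r : ℤ) * ∑ i ∈ range m, a i + ∑ i ∈ Ico m (m + ε), a i =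
      (r - 1) • ∑ i ∈ range m, a i + ∑ i ∈ range (m + ε), a i := by
    rw [← sum_range_add_sum_Ico _ (m.le_add_right ε), nsmul_eq_mul, Nat.cast_sub (by omega)]
    ring
  rw [hvalue]
  exact (hleast_m.iterSum (r - 1)).add hleast_mε
end
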